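/- arXiv:math/0508533 — 8 statements merged into one kernel-verified Lean document; each statement's English description precedes it below -/
import Mathlib

section
/- The point y⁽³⁾=(−a^{−1/2},−a^{−1/2}) lies on the ellipse E and ∇e(y⁽³⁾) is a nonzero scalar multiple of (1,0). Moreover, there is a unique point y⁽²⁾ of E with y₂-coordinate negative satisfying y₃⁽²⁾=((a+b)/b)·y₂⁽²⁾; this point lies in the open quadrant {y₂<0, y₃<0}, and ∇e(y⁽²⁾) is a nonzero scalar multiple of (0,1). -/
noncomputable section

/-- The quadratic form `e(y₂,y₃) = a·y₂² + b·(y₂−y₃)²` defining the ellipse. -/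
def eF (a b : ℝ) (y : ℝ × ℝ) : ℝ := a * y.1 ^ 2 + b * (y.1 - y.2) ^ 2

/-- The gradient of `eF`. -/
def gradE (a b : ℝ) (y : ℝ × ℝ) : ℝ × ℝ :=
  (2 * a * y.1 + 2 * b * (y.1 - y.2), -(2 * b * (y.1 - y.2)))

/-- Euclidean inner product on `ℝ × ℝ`. -/
def dotp (u v : ℝ × ℝ) : ℝ := u.1 * v.1 + u.2 * v.2

/-- Euclidean norm on `ℝ × ℝ`. -/
def enorm2 (v : ℝ × ℝ) : ℝ := Real.sqrt (v.1 ^ 2 + v.2 ^ 2)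

/-- `T` is a point of the ellipse in the open quadrant `{y₂<0, y₃<0}` where the
gradient of `e` is a positive multiple of `(−Δ, 1)`. -/
def IsT3 (a b Δ : ℝ) (T : ℝ × ℝ) : Prop :=
  eF a b T = 1 ∧ T.1 < 0 ∧ T.2 < 0 ∧ ∃ c > 0, gradE a b T = c • ((-Δ, 1) : ℝ × ℝ)

/-- `T` is a point of the ellipse with `y₃ < 0` where the gradient of `e`
is a positive multiple of `(1, −Δ)`. -/
def IsT2 (a b Δ : ℝ) (T : ℝ × ℝ) : Prop :=
  eF a b T = 1 ∧ T.2 < 0 ∧ ∃ c > 0, gradE a b T = c • ((1, -Δ) : ℝ × ℝ)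

/-- The configuration of the tangency points `T₂, T₃` and of the intercepts
`K₂ = (u₂,0)`, `K₃ = (0,u₃)` of the corresponding tangent lines with the axes. -/
def GoodConfig (a b Δ u₂ u₃ : ℝ) (T₂ T₃ : ℝ × ℝ) : Prop :=
  IsT2 a b Δ T₂ ∧ IsT3 a b Δ T₃ ∧ 0 < u₂ ∧ 0 < u₃ ∧
  dotp (gradE a b T₂) (((u₂, 0) : ℝ × ℝ) - T₂) = 0 ∧
  dotp (gradE a b T₃) (((0, u₃) : ℝ × ℝ) - T₃) = 0

/-- The closed arc of the ellipse from `T₂` to `T₃` passing through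
`(−a^{−1/2}, −a^{−1/2})`: the points of the ellipse whose outward normal direction
lies in the closed convex cone spanned by `(1, −Δ)` (normal at `T₂`) and
`(−Δ, 1)` (normal at `T₃`). -/
def arcE (a b Δ : ℝ) : Set (ℝ × ℝ) :=
  {y | eF a b y = 1 ∧ ∃ c₂ c₃ : ℝ, 0 ≤ c₂ ∧ 0 ≤ c₃ ∧
    gradE a b y = c₂ • ((1, -Δ) : ℝ × ℝ) + c₃ • ((-Δ, 1) : ℝ × ℝ)}

/-- The closed contour `L`: segment `K₃K₂`, segment `K₂T₂`, the arc of the ellipse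
from `T₂` to `T₃` through `(−a^{−1/2},−a^{−1/2})`, and segment `T₃K₃`. -/
def contourL (a b Δ u₂ u₃ : ℝ) (T₂ T₃ : ℝ × ℝ) : Set (ℝ × ℝ) :=
  segment ℝ ((0, u₃) : ℝ × ℝ) ((u₂, 0) : ℝ × ℝ) ∪
    segment ℝ ((u₂, 0) : ℝ × ℝ) T₂ ∪ arcE a b Δ ∪
    segment ℝ T₃ ((0, u₃) : ℝ × ℝ)

/-- `φ` is the homogeneous functional associated with the contour `L`:
`φ(0) = 0` and, for `y ≠ 0`, `φ(y)` is positive with `y/φ(y) ∈ L`. -/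
def IsPhi (L : Set (ℝ × ℝ)) (φ : ℝ × ℝ → ℝ) : Prop :=
  φ 0 = 0 ∧ ∀ y : ℝ × ℝ, y ≠ 0 → 0 < φ y ∧ (φ y)⁻¹ • y ∈ L

/-- `n` is the outward unit normal field of the contour `L` (defined except at
`K₂` and `K₃`): on the elliptic arc it is `∇e(y)/‖∇e(y)‖`, and it is constant on
each of the three straight pieces, equal to `n(T₂)` on `(K₂,T₂]`, to `n(T₃)` on
`[T₃,K₃)`, and to the normalized `(u₂⁻¹, u₃⁻¹)` on `(K₃,K₂)`. -/
def IsN (a b Δ u₂ u₃ : ℝ) (T₂ T₃ : ℝ × ℝ) (n : ℝ × ℝ → ℝ × ℝ) : Prop :=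
  (∀ y ∈ arcE a b Δ, n y = (enorm2 (gradE a b y))⁻¹ • gradE a b y) ∧
  (∀ y ∈ segment ℝ ((u₂, 0) : ℝ × ℝ) T₂, y ≠ ((u₂, 0) : ℝ × ℝ) → n y = n T₂) ∧
  (∀ y ∈ segment ℝ T₃ ((0, u₃) : ℝ × ℝ), y ≠ ((0, u₃) : ℝ × ℝ) → n y = n T₃) ∧
  (∀ y ∈ segment ℝ ((0, u₃) : ℝ × ℝ) ((u₂, 0) : ℝ × ℝ),
    y ≠ ((0, u₃) : ℝ × ℝ) → y ≠ ((u₂, 0) : ℝ × ℝ) →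
    n y = (enorm2 ((u₂⁻¹, u₃⁻¹) : ℝ × ℝ))⁻¹ • ((u₂⁻¹, u₃⁻¹) : ℝ × ℝ))

/-!
On the diagonal `y₃ = y₂` and on the line `y₃ = ((a+b)/b)·y₂` the form `e` restricts to
`k·s²` (with `k = a`, resp. `k = a(a+b)/b`) and `∇e` is parallel to `(1,0)`, resp. `(0,1)`.
So both points come from the unique negative root `s = -k^{-1/2}` of `k·s² = 1`.
-/

theorem eF_diag (a b t : ℝ) : eF a b (t, t) = a * t ^ 2 := by
  simp [eF]

theorem gradE_diag (a b t : ℝ) : gradE a b (t, t) = (2 * a * t) • ((1, 0) : ℝ × ℝ) := by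
  simp [gradE]

theorem eF_slope_line {b : ℝ} (hb : b ≠ 0) (a s : ℝ) :
    eF a b (s, (a + b) / b * s) = a * (a + b) / b * s ^ 2 := by
  simp only [eF]
  field_simp
  ring

theorem gradE_slope_line {b : ℝ} (hb : b ≠ 0) (a s : ℝ) :
    gradE a b (s, (a + b) / b * s) = (2 * a * s) • ((0, 1) : ℝ × ℝ) := by
  simp only [gradE, Prod.smul_mk, smul_eq_mul, mul_zero, mul_one, Prod.mk.injEq]
  constructor <;> field_simp <;> ring

theorem mul_sq_eq_one_iff_of_neg {k s : ℝ} (hk : 0 < k) (hs : s < 0) :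
    k * s ^ 2 = 1 ↔ s = -(√k)⁻¹ := by
  have hsq : ((√k)⁻¹) ^ 2 = k⁻¹ := by rw [inv_pow, Real.sq_sqrt hk.le]
  constructor
  · intro h
    have h' : (-s) ^ 2 = ((√k)⁻¹) ^ 2 := by
      rw [hsq, neg_sq]
      exact eq_inv_of_mul_eq_one_right h
    rw [← neg_neg s, (pow_left_inj₀ (by linarith) (by positivity) two_ne_zero).1 h']
  · rintro rfl
    rw [neg_sq, hsq, mul_inv_cancel₀ hk.ne']

/-- the point `y⁽³⁾ = (−a^{−1/2}, −a^{−1/2})` lies on the ellipse and the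
gradient of `e` there is a nonzero multiple of `(1,0)`; moreover there is a unique point
`y⁽²⁾` of the ellipse with negative `y₂`-coordinate and `y₃ = ((a+b)/b)·y₂`; it lies in
the open quadrant `{y₂<0, y₃<0}` and the gradient of `e` there is a nonzero multiple
of `(0,1)`. -/
theorem stmt1 (a b : ℝ) (ha : 0 < a) (hb : 0 < b) :
    eF a b ((-(Real.sqrt a)⁻¹, -(Real.sqrt a)⁻¹) : ℝ × ℝ) = 1 ∧
    (∃ c : ℝ, c ≠ 0 ∧
      gradE a b ((-(Real.sqrt a)⁻¹, -(Real.sqrt a)⁻¹) : ℝ × ℝ) = c • ((1, 0) : ℝ × ℝ)) ∧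
    ∃ y : ℝ × ℝ,
      (eF a b y = 1 ∧ y.1 < 0 ∧ y.2 = ((a + b) / b) * y.1) ∧
      (∀ y' : ℝ × ℝ, (eF a b y' = 1 ∧ y'.1 < 0 ∧ y'.2 = ((a + b) / b) * y'.1) → y' = y) ∧
      y.1 < 0 ∧ y.2 < 0 ∧ ∃ c : ℝ, c ≠ 0 ∧ gradE a b y = c • ((0, 1) : ℝ × ℝ) := by
  have hk : 0 < a * (a + b) / b := by positivity
  have ht : -(√a)⁻¹ < 0 := neg_neg_of_pos (by positivity)
  set s := -(√(a * (a + b) / b))⁻¹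
  have hs : s < 0 := neg_neg_of_pos (by positivity)
  refine ⟨?_, ⟨2 * a * -(√a)⁻¹, (mul_neg_of_pos_of_neg (by positivity) ht).ne, gradE_diag a b _⟩,
    (s, (a + b) / b * s), ⟨?_, hs, rfl⟩, ?_, hs, mul_neg_of_pos_of_neg (by positivity) hs,
    2 * a * s, (mul_neg_of_pos_of_neg (by positivity) hs).ne, gradE_slope_line hb.ne' a s⟩
  · rw [eF_diag, mul_sq_eq_one_iff_of_neg ha ht]
  · rw [eF_slope_line hb.ne', mul_sq_eq_one_iff_of_neg hk hs]
  · rintro ⟨s', u⟩ ⟨hs'e, hs'_neg, hu⟩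
    dsimp only at hs'_neg hu
    subst hu
    rw [eF_slope_line hb.ne', mul_sq_eq_one_iff_of_neg hk hs'_neg] at hs'e
    rw [hs'e]
end
end

section
/- There exists Δ₀>0 such that for every Δ>Δ₀, every ray of the form {c·v : c>0} with v∈ℝ²∖{0} intersects the contour L in exactly one point. -/
noncomputable section

/-!
The four points `K₃, K₂, T₂, T₃` turn clockwise: consecutive `2 × 2` determinants are negative
(for `T₂, T₃` because `∇e` is linear with determinant `4ab` and
`det((1, -Δ), (-Δ, 1)) = 1 - Δ² < 0` once `Δ > 1`). Hence the cones spanned by consecutive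
points cover the plane, adjacent ones meet only along their common edge and opposite ones only
at `0`. Each piece of `L` lies in its cone and meets every ray of that cone exactly once: a
segment with independent endpoints by linear algebra, and the arc because it is the part of
the level set `e = 1` inside the cone of `T₂, T₃` and `e` is homogeneous of degree two.
-/

def det2 (u v : ℝ × ℝ) : ℝ := u.1 * v.2 - u.2 * v.1

theorem det2_neg_right (P v : ℝ × ℝ) : det2 P (-v) = -det2 P v := by
  simp only [det2, Prod.fst_neg, Prod.snd_neg]; ring

theorem det2_smul_add_smul_right (P Q : ℝ × ℝ) (s t : ℝ) :
    det2 P (s • P + t • Q) = t * det2 P Q := by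
  simp only [det2, Prod.fst_add, Prod.snd_add, Prod.smul_fst, Prod.smul_snd, smul_eq_mul]; ring

theorem det2_smul_add_smul_left (P Q : ℝ × ℝ) (s t : ℝ) :
    det2 Q (s • P + t • Q) = -(s * det2 P Q) := by
  simp only [det2, Prod.fst_add, Prod.snd_add, Prod.smul_fst, Prod.smul_snd, smul_eq_mul]; ring

theorem det2_smul_eq (P Q v : ℝ × ℝ) :
    det2 P Q • v = (-det2 Q v) • P + det2 P v • Q := by
  ext <;> simp only [det2, Prod.fst_add, Prod.snd_add, Prod.smul_fst, Prod.smul_snd,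
    smul_eq_mul] <;> ring

theorem det2_plucker (P Q R v : ℝ × ℝ) :
    det2 P Q * det2 R v + det2 Q R * det2 P v + det2 R P * det2 Q v = 0 := by
  simp only [det2]; ring

theorem eq_zero_of_det2_eq_zero {P Q v : ℝ × ℝ} (hPQ : det2 P Q ≠ 0)
    (hP : det2 P v = 0) (hQ : det2 Q v = 0) : v = 0 := by
  have h := det2_smul_eq P Q v
  rw [hP, hQ, neg_zero, zero_smul, zero_smul, add_zero] at h
  exact (smul_eq_zero.mp h).resolve_left hPQ

section Cone

variable {E : Type*} [AddCommGroup E] [Module ℝ E]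

def cone (P Q : E) : Set E := {v | ∃ α β : ℝ, 0 ≤ α ∧ 0 ≤ β ∧ v = α • P + β • Q}

theorem left_mem_cone (P Q : E) : P ∈ cone P Q := ⟨1, 0, zero_le_one, le_rfl, by simp⟩

theorem right_mem_cone (P Q : E) : Q ∈ cone P Q := ⟨0, 1, le_rfl, zero_le_one, by simp⟩

theorem smul_mem_cone {P Q v : E} {c : ℝ} (hc : 0 ≤ c) (hv : v ∈ cone P Q) :
    c • v ∈ cone P Q := by
  obtain ⟨α, β, hα, hβ, rfl⟩ := hv
  exact ⟨c * α, c * β, mul_nonneg hc hα, mul_nonneg hc hβ, by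
    rw [smul_add, smul_smul, smul_smul]⟩

theorem mem_cone_of_smul_mem {P Q v : E} {c : ℝ} (hc : 0 < c) (hv : c • v ∈ cone P Q) :
    v ∈ cone P Q := by
  simpa [smul_smul, inv_mul_cancel₀ hc.ne'] using smul_mem_cone (inv_nonneg.mpr hc.le) hv

theorem segment_subset_cone (P Q : E) : segment ℝ P Q ⊆ cone P Q := by
  rintro _ ⟨s, t, hs, ht, -, rfl⟩
  exact ⟨s, t, hs, ht, rfl⟩

theorem cone_smul_smul (P Q : E) {c d : ℝ} (hc : 0 < c) (hd : 0 < d) :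
    cone (c • P) (d • Q) = cone P Q := by
  ext v
  constructor
  · rintro ⟨α, β, hα, hβ, rfl⟩
    exact ⟨α * c, β * d, by positivity, by positivity, by simp only [smul_smul]⟩
  · rintro ⟨α, β, hα, hβ, rfl⟩
    refine ⟨α / c, β / d, by positivity, by positivity, ?_⟩
    rw [smul_smul, smul_smul, div_mul_cancel₀ _ hc.ne', div_mul_cancel₀ _ hd.ne']

theorem map_mem_cone_iff {F : Type*} [AddCommGroup F] [Module ℝ F] (G : E →ₗ[ℝ] F)
    (hG : Function.Injective G) {P Q v : E} : G v ∈ cone (G P) (G Q) ↔ v ∈ cone P Q := by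
  constructor
  · rintro ⟨α, β, hα, hβ, h⟩
    exact ⟨α, β, hα, hβ, hG (by simpa using h)⟩
  · rintro ⟨α, β, hα, hβ, rfl⟩
    exact ⟨α, β, hα, hβ, by simp⟩

end Cone

theorem mem_cone_iff {P Q : ℝ × ℝ} (hPQ : det2 P Q < 0) {v : ℝ × ℝ} :
    v ∈ cone P Q ↔ det2 P v ≤ 0 ∧ 0 ≤ det2 Q v := by
  constructor
  · rintro ⟨α, β, hα, hβ, rfl⟩
    rw [det2_smul_add_smul_right, det2_smul_add_smul_left]
    constructor <;> nlinarith
  · rintro ⟨hP, hQ⟩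
    refine ⟨-det2 Q v / det2 P Q, det2 P v / det2 P Q, div_nonneg_of_nonpos (by linarith) hPQ.le,
      div_nonneg_of_nonpos hP hPQ.le, ?_⟩
    rw [div_eq_inv_mul, div_eq_inv_mul, ← smul_smul, ← smul_smul, ← smul_add, ← det2_smul_eq,
      smul_smul, inv_mul_cancel₀ hPQ.ne, one_smul]

theorem exists_pos_smul_of_mem_cone_of_mem_cone {P Q R v : ℝ × ℝ} (hPQ : det2 P Q < 0)
    (hQR : det2 Q R < 0) (h₁ : v ∈ cone P Q) (h₂ : v ∈ cone Q R) (hv : v ≠ 0) :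
    ∃ t : ℝ, 0 < t ∧ v = t • Q := by
  obtain ⟨hPv, hQv⟩ := (mem_cone_iff hPQ).mp h₁
  have hQv₀ : det2 Q v = 0 := le_antisymm ((mem_cone_iff hQR).mp h₂).1 hQv
  have hvQ : v = (det2 P v / det2 P Q) • Q := by
    rw [div_eq_inv_mul, ← smul_smul, eq_inv_smul_iff₀ hPQ.ne, det2_smul_eq, hQv₀, neg_zero,
      zero_smul, zero_add]
  refine ⟨det2 P v / det2 P Q, lt_of_le_of_ne (div_nonneg_of_nonpos hPv hPQ.le) ?_, hvQ⟩
  rintro h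
  exact hv (by rw [hvQ, ← h, zero_smul])

section FourVectors

variable {P₁ P₂ P₃ P₄ : ℝ × ℝ}

theorem not_forall_det2_pos (h₁₂ : det2 P₁ P₂ < 0) (h₂₃ : det2 P₂ P₃ < 0)
    (h₃₄ : det2 P₃ P₄ < 0) (h₄₁ : det2 P₄ P₁ < 0) (v : ℝ × ℝ) :
    ¬ (0 < det2 P₁ v ∧ 0 < det2 P₂ v ∧ 0 < det2 P₃ v ∧ 0 < det2 P₄ v) := by
  rintro ⟨d₁, d₂, d₃, d₄⟩
  rcases le_or_gt (det2 P₃ P₁) 0 with h₃₁ | h₃₁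
  · have := det2_plucker P₁ P₂ P₃ v
    nlinarith [mul_neg_of_neg_of_pos h₁₂ d₃, mul_neg_of_neg_of_pos h₂₃ d₁,
      mul_nonpos_of_nonpos_of_nonneg h₃₁ d₂.le]
  · have := det2_plucker P₁ P₃ P₄ v
    have h₁₃ : det2 P₁ P₃ < 0 := by simp only [det2] at h₃₁ ⊢; linarith
    nlinarith [mul_neg_of_neg_of_pos h₁₃ d₄, mul_neg_of_neg_of_pos h₃₄ d₁,
      mul_neg_of_neg_of_pos h₄₁ d₃]

theorem eq_zero_of_mem_cone_of_mem_cone (h₁₂ : det2 P₁ P₂ < 0) (h₂₃ : det2 P₂ P₃ < 0)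
    (h₃₄ : det2 P₃ P₄ < 0) (h₄₁ : det2 P₄ P₁ < 0) {v : ℝ × ℝ}
    (hv₁₂ : v ∈ cone P₁ P₂) (hv₃₄ : v ∈ cone P₃ P₄) : v = 0 := by
  obtain ⟨d₁, d₂⟩ := (mem_cone_iff h₁₂).mp hv₁₂
  obtain ⟨d₃, d₄⟩ := (mem_cone_iff h₃₄).mp hv₃₄
  have e₁₂₃ := det2_plucker P₁ P₂ P₃ v
  have e₁₃₄ := det2_plucker P₁ P₃ P₄ v
  have e₂₃₄ := det2_plucker P₂ P₃ P₄ v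
  have h₁₃ : det2 P₁ v = 0 ∧ det2 P₃ v = 0 := by
    rcases le_or_gt 0 (det2 P₃ P₁) with h₃₁ | h₃₁
    · constructor <;> nlinarith [mul_nonneg_of_nonpos_of_nonpos h₁₂.le d₃,
        mul_nonneg_of_nonpos_of_nonpos h₂₃.le d₁, mul_nonneg h₃₁ d₂]
    · have h₁₃ : 0 < det2 P₁ P₃ := by simp only [det2] at h₃₁ ⊢; linarith
      constructor <;> nlinarith [mul_nonneg h₁₃.le d₄,
        mul_nonneg_of_nonpos_of_nonpos h₃₄.le d₁, mul_nonneg_of_nonpos_of_nonpos h₄₁.le d₃]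
  refine eq_zero_of_det2_eq_zero h₁₂.ne h₁₃.1 ?_
  rw [h₁₃.2] at e₂₃₄
  nlinarith [mul_nonpos_of_nonpos_of_nonneg h₂₃.le d₄]

end FourVectors

theorem exists_mem_cone {P : Fin 4 → ℝ × ℝ} (hP : ∀ i, det2 (P i) (P (i + 1)) < 0)
    (v : ℝ × ℝ) : ∃ i, v ∈ cone (P i) (P (i + 1)) := by
  by_contra! h
  have step : ∀ i, det2 (P i) v ≤ 0 → det2 (P (i + 1)) v < 0 := fun i hi =>
    not_le.mp fun hi' => h i ((mem_cone_iff (hP i)).mpr ⟨hi, hi'⟩)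
  have h₃ : det2 (P 3) (P 0) < 0 := hP 3
  rcases le_or_gt (det2 (P 0) v) 0 with d₀ | d₀
  · have d₁ := step 0 d₀
    have d₂ := step 1 d₁.le
    have d₃ := step 2 d₂.le
    have d₀' : det2 (P 0) v < 0 := step 3 d₃.le
    refine not_forall_det2_pos (hP 0) (hP 1) (hP 2) h₃ (-v) ?_
    simp only [det2_neg_right, neg_pos]
    exact ⟨d₀', d₁, d₂, d₃⟩
  · have d₃ : 0 < det2 (P 3) v := not_le.mp fun d₃ => (step 3 d₃).not_gt d₀
    have d₂ : 0 < det2 (P 2) v := not_le.mp fun d₂ => (step 2 d₂).not_gt d₃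
    have d₁ : 0 < det2 (P 1) v := not_le.mp fun d₁ => (step 1 d₁).not_gt d₂
    exact not_forall_det2_pos (hP 0) (hP 1) (hP 2) h₃ v ⟨d₀, d₁, d₂, d₃⟩

structure IsRadialArc {E : Type*} [AddCommGroup E] [Module ℝ E] (P Q : E) (S : Set E) :
    Prop where
  subset_cone : S ⊆ cone P Q
  left_mem : P ∈ S
  right_mem : Q ∈ S
  exists_smul_mem : ∀ v ∈ cone P Q, v ≠ 0 → ∃ c : ℝ, 0 < c ∧ c • v ∈ S
  smul_eq_self : ∀ p ∈ S, ∀ c : ℝ, 0 < c → c • p ∈ S → c • p = p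

theorem isRadialArc_segment {P Q : ℝ × ℝ} (hPQ : det2 P Q ≠ 0) :
    IsRadialArc P Q (segment ℝ P Q) where
  subset_cone := segment_subset_cone P Q
  left_mem := left_mem_segment ℝ P Q
  right_mem := right_mem_segment ℝ P Q
  exists_smul_mem := by
    rintro v ⟨α, β, hα, hβ, rfl⟩ hv
    have hαβ : 0 < α + β := by
      refine lt_of_le_of_ne (add_nonneg hα hβ) fun h => hv ?_
      rw [(add_eq_zero_iff_of_nonneg hα hβ).mp h.symm |>.1,
        (add_eq_zero_iff_of_nonneg hα hβ).mp h.symm |>.2, zero_smul, zero_smul, add_zero]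
    refine ⟨(α + β)⁻¹, inv_pos.mpr hαβ, α / (α + β), β / (α + β), by positivity,
      by positivity, by field_simp, ?_⟩
    rw [smul_add, smul_smul, smul_smul, div_eq_inv_mul, div_eq_inv_mul]
  smul_eq_self := by
    rintro _ ⟨s, t, -, -, hst, rfl⟩ c - ⟨s', t', -, -, hst', hp⟩
    have hs : s' = c * s := by
      have := congrArg (det2 Q) hp
      rw [smul_add, smul_smul, smul_smul, det2_smul_add_smul_left, det2_smul_add_smul_left] at this
      exact mul_right_cancel₀ hPQ (by linarith)
    have ht : t' = c * t := by
      have := congrArg (det2 P) hp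
      rw [smul_add, smul_smul, smul_smul, det2_smul_add_smul_right,
        det2_smul_add_smul_right] at this
      exact mul_right_cancel₀ hPQ this
    have hc : c = 1 := by linear_combination hst' - hs - ht - c * hst
    rw [hc, one_smul]

theorem isRadialArc_inter_cone {E : Type*} [AddCommGroup E] [Module ℝ E] {f : E → ℝ}
    (hf : ∀ (c : ℝ) v, f (c • v) = c ^ 2 * f v) (hpos : ∀ v, v ≠ 0 → 0 < f v) {P Q : E}
    (hP : f P = 1) (hQ : f Q = 1) : IsRadialArc P Q ({p | f p = 1} ∩ cone P Q) where
  subset_cone := Set.inter_subset_right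
  left_mem := ⟨hP, left_mem_cone P Q⟩
  right_mem := ⟨hQ, right_mem_cone P Q⟩
  exists_smul_mem v hv hv₀ := by
    have hfv := hpos v hv₀
    refine ⟨(√(f v))⁻¹, by positivity, ?_, smul_mem_cone (by positivity) hv⟩
    rw [Set.mem_ofPred_eq, hf, inv_pow, Real.sq_sqrt hfv.le, inv_mul_cancel₀ hfv.ne']
  smul_eq_self := by
    rintro p ⟨hp, -⟩ c hc ⟨hcp, -⟩
    rw [Set.mem_ofPred_eq, hf, hp, mul_one, pow_eq_one_iff_of_nonneg hc.le two_ne_zero] at hcp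
    rw [hcp, one_smul]

structure IsFan (P : Fin 4 → ℝ × ℝ) (S : Fin 4 → Set (ℝ × ℝ)) : Prop where
  det2_neg : ∀ i, det2 (P i) (P (i + 1)) < 0
  isRadialArc : ∀ i, IsRadialArc (P i) (P (i + 1)) (S i)

namespace IsFan

variable {P : Fin 4 → ℝ × ℝ} {S : Fin 4 → Set (ℝ × ℝ)}

theorem rotate (hF : IsFan P S) (i : Fin 4) :
    IsFan (fun k => P (k + i)) (fun k => S (k + i)) where
  det2_neg k := by
    show det2 (P (k + i)) (P (k + 1 + i)) < 0
    rw [add_right_comm]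
    exact hF.det2_neg _
  isRadialArc k := by
    show IsRadialArc (P (k + i)) (P (k + 1 + i)) (S (k + i))
    rw [add_right_comm]
    exact hF.isRadialArc _

theorem mem_zero_of_mem_cone (hF : IsFan P S) {v : ℝ × ℝ} (hv : v ∈ cone (P 0) (P 1))
    (hv₀ : v ≠ 0) {j : Fin 4} {c : ℝ} (hc : 0 < c) (hcv : c • v ∈ S j) : c • v ∈ S 0 := by
  have hvj : v ∈ cone (P j) (P (j + 1)) :=
    mem_cone_of_smul_mem hc ((hF.isRadialArc j).subset_cone hcv)
  have eq_vertex : ∀ k, P k ∈ S j → ∀ t : ℝ, 0 < t → v = t • P k → c • v = P k := by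
    rintro k hk t ht rfl
    rw [smul_smul] at hcv ⊢
    exact (hF.isRadialArc j).smul_eq_self _ hk _ (mul_pos hc ht) hcv
  -- adjacent cones meet along their common edge, whose vertex lies on both pieces;
  -- opposite cones meet only at `0`
  fin_cases j
  · exact hcv
  · obtain ⟨t, ht, hvt⟩ := exists_pos_smul_of_mem_cone_of_mem_cone (hF.det2_neg 0)
      (hF.det2_neg 1) hv hvj hv₀
    rw [eq_vertex 1 (hF.isRadialArc 1).left_mem t ht hvt]
    exact (hF.isRadialArc 0).right_mem
  · exact absurd (eq_zero_of_mem_cone_of_mem_cone (hF.det2_neg 0) (hF.det2_neg 1)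
      (hF.det2_neg 2) (hF.det2_neg 3) hv hvj) hv₀
  · obtain ⟨t, ht, hvt⟩ := exists_pos_smul_of_mem_cone_of_mem_cone (hF.det2_neg 3)
      (hF.det2_neg 0) hvj hv hv₀
    rw [eq_vertex 0 (hF.isRadialArc 3).right_mem t ht hvt]
    exact (hF.isRadialArc 0).left_mem

theorem mem_of_mem_cone (hF : IsFan P S) {i : Fin 4} {v : ℝ × ℝ}
    (hv : v ∈ cone (P i) (P (i + 1))) (hv₀ : v ≠ 0) {j : Fin 4} {c : ℝ} (hc : 0 < c)
    (hcv : c • v ∈ S j) : c • v ∈ S i := by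
  have := (hF.rotate i).mem_zero_of_mem_cone (by simpa [add_comm] using hv) hv₀ (j := j - i) hc
    (by simpa using hcv)
  simpa using this

theorem existsUnique_smul_mem (hF : IsFan P S) {v : ℝ × ℝ} (hv : v ≠ 0) :
    ∃! p : ℝ × ℝ, (∃ i, p ∈ S i) ∧ ∃ c : ℝ, 0 < c ∧ p = c • v := by
  obtain ⟨i, hi⟩ := exists_mem_cone hF.det2_neg v
  obtain ⟨c, hc, hcv⟩ := (hF.isRadialArc i).exists_smul_mem v hi hv
  refine ⟨c • v, ⟨⟨i, hcv⟩, c, hc, rfl⟩, ?_⟩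
  rintro _ ⟨⟨j, hj⟩, d, hd, rfl⟩
  have hdi : d • v ∈ S i := hF.mem_of_mem_cone hi hv hd hj
  have hdc : (d / c) • c • v = d • v := by rw [smul_smul, div_mul_cancel₀ _ hc.ne']
  rw [← hdc] at hdi ⊢
  exact (hF.isRadialArc i).smul_eq_self _ hcv _ (div_pos hd hc) hdi

end IsFan

section Ellipse

variable {a b : ℝ}

theorem eF_smul (a b c : ℝ) (v : ℝ × ℝ) : eF a b (c • v) = c ^ 2 * eF a b v := by
  simp only [eF, Prod.smul_fst, Prod.smul_snd, smul_eq_mul]; ring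

theorem eF_pos (ha : 0 < a) (hb : 0 < b) {v : ℝ × ℝ} (hv : v ≠ 0) : 0 < eF a b v := by
  rcases v with ⟨x, y⟩
  simp only [eF]
  rcases eq_or_ne x 0 with rfl | hx
  · have hy : y ≠ 0 := fun hy => hv (by simp [hy])
    positivity
  · positivity

def gradELinear (a b : ℝ) : ℝ × ℝ →ₗ[ℝ] ℝ × ℝ where
  toFun := gradE a b
  map_add' u w := by
    ext <;> simp only [gradE, Prod.fst_add, Prod.snd_add] <;> ring
  map_smul' c u := by
    ext <;> simp only [gradE, Prod.smul_fst, Prod.smul_snd, smul_eq_mul, RingHom.id_apply] <;> ring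

theorem gradE_injective (ha : a ≠ 0) (hb : b ≠ 0) : Function.Injective (gradE a b) := by
  intro u w h
  simp only [gradE, Prod.mk.injEq] at h
  obtain ⟨h₁, h₂⟩ := h
  have hd : u.1 - u.2 = w.1 - w.2 := by simpa [hb] using h₂
  rw [hd] at h₁
  have hu : u.1 = w.1 := by simpa [ha] using h₁
  exact Prod.ext hu (by linarith)

theorem det2_gradE (a b : ℝ) (u w : ℝ × ℝ) :
    det2 (gradE a b u) (gradE a b w) = 4 * a * b * det2 u w := by
  simp only [det2, gradE]; ring

variable {Δ c₂ c₃ : ℝ} {T₂ T₃ : ℝ × ℝ}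

theorem arcE_eq (ha : a ≠ 0) (hb : b ≠ 0) (hc₂ : 0 < c₂) (hc₃ : 0 < c₃)
    (hT₂ : gradE a b T₂ = c₂ • ((1, -Δ) : ℝ × ℝ))
    (hT₃ : gradE a b T₃ = c₃ • ((-Δ, 1) : ℝ × ℝ)) :
    arcE a b Δ = {p | eF a b p = 1} ∩ cone T₂ T₃ := by
  ext p
  rw [Set.mem_inter_iff, ← map_mem_cone_iff (gradELinear a b) (gradE_injective ha hb)]
  show _ ↔ _ ∧ gradE a b p ∈ cone (gradE a b T₂) (gradE a b T₃)
  rw [hT₂, hT₃, cone_smul_smul _ _ hc₂ hc₃]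
  rfl

theorem det2_neg_of_gradE (ha : 0 < a) (hb : 0 < b) (hΔ : 1 < Δ) (hc₂ : 0 < c₂) (hc₃ : 0 < c₃)
    (hT₂ : gradE a b T₂ = c₂ • ((1, -Δ) : ℝ × ℝ))
    (hT₃ : gradE a b T₃ = c₃ • ((-Δ, 1) : ℝ × ℝ)) : det2 T₂ T₃ < 0 := by
  have h := det2_gradE a b T₂ T₃
  rw [hT₂, hT₃] at h
  simp only [det2, Prod.smul_fst, Prod.smul_snd, smul_eq_mul] at h ⊢
  have hab : 0 < 4 * a * b := by positivity
  nlinarith [mul_pos (mul_pos hc₂ hc₃) (by nlinarith : (0 : ℝ) < Δ ^ 2 - 1)]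

end Ellipse

/-- for all sufficiently large `Δ`, every ray `{c·v : c > 0}` with
`v ≠ 0` meets the contour `L` in exactly one point. -/
theorem stmt2 (a b : ℝ) (ha : 0 < a) (hb : 0 < b) :
    ∃ Δ₀ > (0 : ℝ), ∀ Δ > Δ₀, ∀ u₂ u₃ : ℝ, ∀ T₂ T₃ : ℝ × ℝ,
      GoodConfig a b Δ u₂ u₃ T₂ T₃ →
      ∀ v : ℝ × ℝ, v ≠ 0 →
        ∃! p : ℝ × ℝ, p ∈ contourL a b Δ u₂ u₃ T₂ T₃ ∧ ∃ c : ℝ, 0 < c ∧ p = c • v := by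
  refine ⟨1, one_pos, fun Δ hΔ u₂ u₃ T₂ T₃ hcfg v hv => ?_⟩
  obtain ⟨⟨hT₂, hT₂y, n₂, hn₂, hg₂⟩, ⟨hT₃, hT₃x, -, n₃, hn₃, hg₃⟩, hu₂, hu₃, -, -⟩ := hcfg
  rw [← Nat.cast_smul_eq_nsmul ℝ] at hg₂ hg₃
  have hc₂ : (0 : ℝ) < n₂ := Nat.cast_pos.mpr hn₂
  have hc₃ : (0 : ℝ) < n₃ := Nat.cast_pos.mpr hn₃
  have h₁ : det2 (0, u₃) (u₂, 0) < 0 := by simp only [det2]; nlinarith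
  have h₂ : det2 (u₂, 0) T₂ < 0 := by simp only [det2]; nlinarith
  have h₃ : det2 T₂ T₃ < 0 := det2_neg_of_gradE ha hb hΔ hc₂ hc₃ hg₂ hg₃
  have h₄ : det2 T₃ (0, u₃) < 0 := by simp only [det2]; nlinarith
  have harc : IsRadialArc T₂ T₃ (arcE a b Δ) := by
    rw [arcE_eq ha.ne' hb.ne' hc₂ hc₃ hg₂ hg₃]
    exact isRadialArc_inter_cone (eF_smul a b) (fun _ => eF_pos ha hb) hT₂ hT₃
  have hfan : IsFan ![(0, u₃), (u₂, 0), T₂, T₃]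
      ![segment ℝ (0, u₃) (u₂, 0), segment ℝ (u₂, 0) T₂, arcE a b Δ, segment ℝ T₃ (0, u₃)] :=
    ⟨fun i => by fin_cases i; exacts [h₁, h₂, h₃, h₄],
     fun i => by
      fin_cases i
      exacts [isRadialArc_segment h₁.ne, isRadialArc_segment h₂.ne, harc,
        isRadialArc_segment h₄.ne]⟩
  simpa [contourL, Fin.exists_fin_succ, or_assoc] using hfan.existsUnique_smul_mem hv
end
end

section
/- For all sufficiently large Δ>0 and for every point y∈L other than K₂ and K₃, the inner product ⟨n(y), y⟩ is nonzero. -/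
noncomputable section

lemma dotp_smul_left (c : ℝ) (g y : ℝ × ℝ) : dotp (c • g) y = c * dotp g y := by
  simp [dotp, Prod.smul_fst, Prod.smul_snd, smul_eq_mul]; ring

lemma dotp_comb (g p q : ℝ × ℝ) (s t : ℝ) :
    dotp g (s • p + t • q) = s * dotp g p + t * dotp g q := by
  simp [dotp, Prod.smul_fst, Prod.smul_snd, smul_eq_mul]; ring

lemma dotp_sub (g p q : ℝ × ℝ) : dotp g (p - q) = dotp g p - dotp g q := by
  simp [dotp]; ring

lemma euler (a b : ℝ) (y : ℝ × ℝ) : dotp (gradE a b y) y = 2 * eF a b y := by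
  simp [dotp, gradE, eF]; ring

lemma pos_dot (g y : ℝ × ℝ) (d : ℝ) (hd : 0 < d) (h : dotp g y = d) :
    0 < dotp ((enorm2 g)⁻¹ • g) y := by
  have hgg : 0 < g.1 ^ 2 + g.2 ^ 2 := by
    by_contra hc
    push_neg at hc
    have h1 : g.1 = 0 := by nlinarith [sq_nonneg g.1, sq_nonneg g.2]
    have h2 : g.2 = 0 := by nlinarith [sq_nonneg g.1, sq_nonneg g.2]
    rw [dotp, h1, h2] at h
    simp at h
    linarith
  have he : 0 < enorm2 g := Real.sqrt_pos.mpr hgg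
  rw [dotp_smul_left, h]
  positivity

/-- for all sufficiently large `Δ` and for every point `y` of `L` other
than `K₂ = (u₂,0)` and `K₃ = (0,u₃)`, the inner product `⟨n(y), y⟩` is nonzero. -/
theorem stmt4 (a b : ℝ) (ha : 0 < a) (hb : 0 < b) :
    ∃ Δ₀ > (0 : ℝ), ∀ Δ > Δ₀, ∀ u₂ u₃ : ℝ, ∀ T₂ T₃ : ℝ × ℝ,
      GoodConfig a b Δ u₂ u₃ T₂ T₃ →
      ∀ n : ℝ × ℝ → ℝ × ℝ, IsN a b Δ u₂ u₃ T₂ T₃ n →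
      ∀ y ∈ contourL a b Δ u₂ u₃ T₂ T₃,
        y ≠ ((u₂, 0) : ℝ × ℝ) → y ≠ ((0, u₃) : ℝ × ℝ) → dotp (n y) y ≠ 0 := by
  refine ⟨1, one_pos, ?_⟩
  intro Δ hΔ u₂ u₃ T₂ T₃ hcfg n hn y hy hy2 hy3
  obtain ⟨hT2, hT3, hu2, hu3, htan2, htan3⟩ := hcfg
  obtain ⟨he2, hT2s, c2, hc2, hg2⟩ := hT2
  obtain ⟨he3, hT3f, hT3s, c3, hc3, hg3⟩ := hT3
  obtain ⟨hnArc, hnB, hnC, hnA⟩ := hn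
  -- T₂, T₃ lie on the arc
  have hT2arc : T₂ ∈ arcE a b Δ := by
    refine ⟨he2, (c2 : ℝ), 0, by exact_mod_cast hc2.le, le_refl 0, ?_⟩
    rw [hg2]; push_cast; simp
  have hT3arc : T₃ ∈ arcE a b Δ := by
    refine ⟨he3, 0, (c3 : ℝ), le_refl 0, by exact_mod_cast hc3.le, ?_⟩
    rw [hg3]; push_cast; simp
  have euler2 : dotp (gradE a b T₂) T₂ = 2 := by rw [euler, he2]; ring
  have euler3 : dotp (gradE a b T₃) T₃ = 2 := by rw [euler, he3]; ring
  rcases hy with ((hA | hB) | hC) | hD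
  · -- bottom segment from (0,u₃) to (u₂,0)
    rw [hnA y hA hy3 hy2]
    obtain ⟨s, t, hs, ht, hst, rfl⟩ := hA
    have hdot : dotp ((u₂⁻¹, u₃⁻¹) : ℝ × ℝ) (s • ((0, u₃) : ℝ × ℝ) + t • ((u₂, 0) : ℝ × ℝ)) = 1 := by
      rw [dotp_comb]
      have h1 : dotp ((u₂⁻¹, u₃⁻¹) : ℝ × ℝ) ((0, u₃) : ℝ × ℝ) = 1 := by
        simp [dotp]; field_simp
      have h2 : dotp ((u₂⁻¹, u₃⁻¹) : ℝ × ℝ) ((u₂, 0) : ℝ × ℝ) = 1 := by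
        simp [dotp]; field_simp
      rw [h1, h2]; linarith
    exact ne_of_gt (pos_dot _ _ 1 one_pos hdot)
  · -- segment from (u₂,0) to T₂
    rw [hnB y hB hy2, hnArc T₂ hT2arc]
    obtain ⟨s, t, hs, ht, hst, rfl⟩ := hB
    have hK2 : dotp (gradE a b T₂) ((u₂, 0) : ℝ × ℝ) = 2 := by
      have := htan2
      rw [dotp_sub] at this
      linarith [euler2]
    have hdot : dotp (gradE a b T₂) (s • ((u₂, 0) : ℝ × ℝ) + t • T₂) = 2 := by
      rw [dotp_comb, hK2, euler2]; linarith
    exact ne_of_gt (pos_dot _ _ 2 two_pos hdot)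
  · -- the elliptic arc
    rw [hnArc y hC]
    have hdot : dotp (gradE a b y) y = 2 := by rw [euler, hC.1]; ring
    exact ne_of_gt (pos_dot _ _ 2 two_pos hdot)
  · -- segment from T₃ to (0,u₃)
    rw [hnC y hD hy3, hnArc T₃ hT3arc]
    obtain ⟨s, t, hs, ht, hst, rfl⟩ := hD
    have hK3 : dotp (gradE a b T₃) ((0, u₃) : ℝ × ℝ) = 2 := by
      have := htan3
      rw [dotp_sub] at this
      linarith [euler3]
    have hdot : dotp (gradE a b T₃) (s • T₃ + t • ((0, u₃) : ℝ × ℝ)) = 2 := by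
      rw [dotp_comb, hK3, euler3]; linarith
    exact ne_of_gt (pos_dot _ _ 2 two_pos hdot)
end
end

section
/- For all sufficiently large Δ>0 and every y∈L at which n is defined (y≠K₂, y≠K₃): if y₂<0 and y₃>y₂ then ⟨n(y),(0,−1)⟩<0, and if y₂>0 and y₃<0 then ⟨n(y),(−1,0)⟩<0. -/
noncomputable section

lemma key_snd (g : ℝ × ℝ) (h : 0 < g.2) :
    dotp ((enorm2 g)⁻¹ • g) ((0, -1) : ℝ × ℝ) < 0 := by
  have hn : 0 < enorm2 g := Real.sqrt_pos.mpr (by nlinarith [sq_nonneg g.1])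
  have : dotp ((enorm2 g)⁻¹ • g) ((0, -1) : ℝ × ℝ) = -((enorm2 g)⁻¹ * g.2) := by
    simp [dotp]
  rw [this]
  have := mul_pos (inv_pos.mpr hn) h
  linarith

lemma key_fst (g : ℝ × ℝ) (h : 0 < g.1) :
    dotp ((enorm2 g)⁻¹ • g) ((-1, 0) : ℝ × ℝ) < 0 := by
  have hn : 0 < enorm2 g := Real.sqrt_pos.mpr (by nlinarith [sq_nonneg g.2])
  have : dotp ((enorm2 g)⁻¹ • g) ((-1, 0) : ℝ × ℝ) = -((enorm2 g)⁻¹ * g.1) := by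
    simp [dotp]
  rw [this]
  have := mul_pos (inv_pos.mpr hn) h
  linarith

/-- for all sufficiently large `Δ` and every `y ∈ L` with `y ≠ K₂`,
`y ≠ K₃`: if `y₂ < 0` and `y₃ > y₂` then `⟨n(y), (0,−1)⟩ < 0`, and if `y₂ > 0`
and `y₃ < 0` then `⟨n(y), (−1,0)⟩ < 0`. -/
theorem stmt6 (a b : ℝ) (ha : 0 < a) (hb : 0 < b) :
    ∃ Δ₀ > (0 : ℝ), ∀ Δ > Δ₀, ∀ u₂ u₃ : ℝ, ∀ T₂ T₃ : ℝ × ℝ,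
      GoodConfig a b Δ u₂ u₃ T₂ T₃ →
      ∀ n : ℝ × ℝ → ℝ × ℝ, IsN a b Δ u₂ u₃ T₂ T₃ n →
      ∀ y ∈ contourL a b Δ u₂ u₃ T₂ T₃,
        y ≠ ((u₂, 0) : ℝ × ℝ) → y ≠ ((0, u₃) : ℝ × ℝ) →
        (y.1 < 0 → y.1 < y.2 → dotp (n y) ((0, -1) : ℝ × ℝ) < 0) ∧
        (0 < y.1 → y.2 < 0 → dotp (n y) ((-1, 0) : ℝ × ℝ) < 0) := by
  refine ⟨1, one_pos, ?_⟩
  intro Δ hΔ u₂ u₃ T₂ T₃ hcfg n hn y hy hyK2 hyK3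
  obtain ⟨hT2, hT3, hu2, hu3, -, -⟩ := hcfg
  obtain ⟨harc, hseg2, hseg3, hseg0⟩ := hn
  have hΔ0 : (0:ℝ) < Δ := lt_trans one_pos hΔ
  obtain ⟨heT2, hT2y, c2, hc2, hg2⟩ := hT2
  obtain ⟨heT3, hT3x, hT3y, c3, hc3, hg3⟩ := hT3
  have hc2' : (0:ℝ) < (c2:ℝ) := by exact_mod_cast hc2
  have hc3' : (0:ℝ) < (c3:ℝ) := by exact_mod_cast hc3
  have hg2_1 : (gradE a b T₂).1 = c2 := by rw [hg2]; simp
  have hg3_2 : (gradE a b T₃).2 = c3 := by rw [hg3]; simp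
  have hT2arc : T₂ ∈ arcE a b Δ :=
    ⟨heT2, (c2:ℝ), 0, hc2'.le, le_refl 0, by rw [hg2]; simp [Nat.cast_smul_eq_nsmul]⟩
  have hT3arc : T₃ ∈ arcE a b Δ :=
    ⟨heT3, 0, (c3:ℝ), le_refl 0, hc3'.le, by rw [hg3]; simp [Nat.cast_smul_eq_nsmul]⟩
  have hnT2 := harc T₂ hT2arc
  have hnT3 := harc T₃ hT3arc
  have hT2diff : 0 < T₂.1 - T₂.2 := by
    have h2 : -(2*b*(T₂.1 - T₂.2)) = (c2:ℝ) * (-Δ) := by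
      have := congrArg Prod.snd hg2
      simpa [gradE] using this
    nlinarith [mul_pos hc2' hΔ0]
  rcases hy with ((hy01 | hy2) | hyarc) | hy3
  · -- segment K₃ K₂ : both parts vacuous
    obtain ⟨s, t, hs, ht, hst, hval⟩ := hy01
    have hy1 : y.1 = t * u₂ := by rw [← hval]; simp
    have hy2v : y.2 = s * u₃ := by rw [← hval]; simp
    constructor
    · intro h1 _; exfalso
      have := mul_nonneg ht hu2.le
      linarith
    · intro _ h2; exfalso
      have := mul_nonneg hs hu3.le
      linarith
  · -- segment K₂ T₂
    obtain ⟨s, t, hs, ht, hst, hval⟩ := hy2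
    have hny : n y = n T₂ := hseg2 y ⟨s, t, hs, ht, hst, hval⟩ hyK2
    have hdiff : 0 < y.1 - y.2 := by
      have h1 : y.1 = s * u₂ + t * T₂.1 := by rw [← hval]; simp
      have h2 : y.2 = t * T₂.2 := by rw [← hval]; simp
      rcases eq_or_lt_of_le hs with hs0 | hs0
      · nlinarith
      · nlinarith
    constructor
    · intro _ hlt; exfalso; linarith
    · intro _ _
      rw [hny, hnT2]
      exact key_fst _ (by rw [hg2_1]; exact hc2')
  · -- arc
    have hny := harc y hyarc
    rw [hny]
    constructor
    · intro _ hlt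
      exact key_snd _ (by simp only [gradE]; nlinarith)
    · intro h1 h2
      exact key_fst _ (by simp only [gradE]; nlinarith)
  · -- segment T₃ K₃
    obtain ⟨s, t, hs, ht, hst, hval⟩ := hy3
    have hny : n y = n T₃ := hseg3 y ⟨s, t, hs, ht, hst, hval⟩ hyK3
    have hy1 : y.1 = s * T₃.1 := by rw [← hval]; simp
    constructor
    · intro _ _
      rw [hny, hnT3]
      exact key_snd _ (by rw [hg3_2]; exact hc3')
    · intro h1 _; exfalso
      have := mul_nonpos_of_nonneg_of_nonpos hs hT3x.le
      linarith
end
end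

section
/- For all sufficiently large Δ>0 there exist constants c₀>0 and κ>0 such that for every y∈ℝ²∖{0} whose projection y* lies on the elliptic arc of L from T₂ to T₃, and for every w∈ℝ² with ‖w−y‖≤κ·‖y‖, one has |φ(w)−⟨∇φ(y*),w⟩| ≤ (c₀/φ(y))·‖w−y‖². -/
noncomputable section

set_option maxHeartbeats 1000000

/-- Cauchy–Schwarz for the bilinear form of `eF`. -/
lemma cs_aux (a b x1 x2 z1 z2 : ℝ) (ha : 0 ≤ a) (hb : 0 ≤ b) :
    (a*x1*z1 + b*(x1-x2)*(z1-z2))^2 ≤ (a*x1^2+b*(x1-x2)^2) * (a*z1^2+b*(z1-z2)^2) := by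
  nlinarith [mul_nonneg (mul_nonneg ha hb) (sq_nonneg (x1*(z1-z2) - z1*(x1-x2)))]

/-- dual Cauchy–Schwarz identity used for the chord. -/
lemma cs_dual (a b P Q X Y : ℝ) :
    a*b*(P*X - Q*Y)^2 ≤ (b*P^2 + a*Q^2) * (a*X^2 + b*Y^2) := by
  nlinarith [sq_nonneg (b*P*Y + a*Q*X)]

lemma aux_one_le_sq (Δ : ℝ) (h : 1 ≤ Δ) : 1 ≤ Δ^2 := by nlinarith

lemma aux_sq_le (X Q : ℝ) (hX : 0 ≤ X) (hQ : 0 ≤ Q) (h : X^2 ≤ Q^2) : X ≤ Q := by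
  nlinarith

lemma aux_abs_le (B t : ℝ) (ht : 0 ≤ t) (h : B^2 ≤ t^2/4) : -(t/2) ≤ B ∧ B ≤ t/2 := by
  constructor <;> nlinarith

lemma aux_gradpos (G1 G2 Y1 Y2 : ℝ) (h : Y1*G1 + Y2*G2 = 2) : 0 < G1^2 + G2^2 := by
  by_contra hcon
  push_neg at hcon
  have h1 : G1 = 0 := by nlinarith [sq_nonneg G1, sq_nonneg G2]
  have h2 : G2 = 0 := by nlinarith [sq_nonneg G1, sq_nonneg G2]
  rw [h1, h2] at h
  norm_num at h

lemma aux_normy (a b y1 y2 t : ℝ) (ha : 0 < a) (hb : 0 < b)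
    (hey : a*y1^2 + b*(y1-y2)^2 = t^2) : a*b*(y1^2+y2^2) ≤ 2*(a+2*b)*t^2 := by
  nlinarith [mul_nonneg (mul_nonneg ha.le hb.le) (sq_nonneg (2*y1 - y2)),
    mul_nonneg (mul_nonneg ha.le ha.le) (sq_nonneg y1),
    mul_nonneg (mul_nonneg ha.le hb.le) (sq_nonneg y1),
    mul_nonneg (mul_nonneg hb.le hb.le) (sq_nonneg (y1-y2))]

lemma aux_heh (a b h1 h2 : ℝ) (ha : 0 < a) (hb : 0 < b) :
    a*h1^2 + b*(h1-h2)^2 ≤ (a+2*b)*(h1^2+h2^2) := by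
  nlinarith [mul_nonneg hb.le (sq_nonneg (h1+h2)), mul_nonneg ha.le (sq_nonneg h2)]

lemma aux_upper (t B R pw ew : ℝ) (ht : 0 < t) (hBl : -(t/2) ≤ B) (hR : 0 ≤ R)
    (hpw : 0 ≤ pw) (hpw2 : pw^2 ≤ ew) (hew : ew ≤ t^2 + 2*t*B + R) :
    t*pw ≤ t^2 + t*B + R := by
  have hQ : 0 ≤ t^2 + t*B + R := by nlinarith
  have hsq : (t*pw)^2 ≤ (t^2 + t*B + R)^2 := by
    nlinarith [mul_le_mul_of_nonneg_left hpw2 (sq_nonneg t),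
      mul_le_mul_of_nonneg_left hew (sq_nonneg t),
      sq_nonneg (t*B + R), mul_nonneg (sq_nonneg t) hR]
  exact aux_sq_le _ _ (mul_nonneg ht.le hpw) hQ hsq

lemma aux_chord_cond (a b Δ u₂ u₃ : ℝ) (ha : 0 < a) (hb : 0 < b) (hΔ1 : 1 ≤ Δ)
    (hS4 : 4 ≤ (1-Δ)^2) (hSab : 4*b + a ≤ b*(1-Δ)^2)
    (habu2 : a*b*u₂^2 = b*(1-Δ)^2 + a*Δ^2) (habu3 : a*b*u₃^2 = b*(1-Δ)^2 + a) :
    b*(u₂+u₃)^2 + a*u₂^2 ≤ a*b*(u₂^2*u₃^2) := by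
  have hP : (a*b*u₂^2)*(a*b*u₃^2) = (b*(1-Δ)^2 + a*Δ^2)*(b*(1-Δ)^2 + a) := by
    rw [habu2, habu3]
  have hPP : 2*b*(a*b*(u₂*u₃)) ≤ b*(a*b*u₂^2) + b*(a*b*u₃^2) := by
    nlinarith [mul_nonneg (mul_nonneg hb.le (mul_nonneg ha.le hb.le)) (sq_nonneg (u₂-u₃))]
  have h1 : 2*b*(a*b*u₂^2) = 2*b*(b*(1-Δ)^2 + a*Δ^2) := by rw [habu2]
  have h2 : 2*b*(a*b*u₃^2) = 2*b*(b*(1-Δ)^2 + a) := by rw [habu3]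
  have h3 : a*(a*b*u₂^2) = a*(b*(1-Δ)^2 + a*Δ^2) := by rw [habu2]
  have hh1 : (0:ℝ) ≤ (b*(1-Δ)^2 - 4*b - a) * (b*(1-Δ)^2) :=
    mul_nonneg (by linarith) (by positivity)
  have hh2 : (0:ℝ) ≤ ((1-Δ)^2 - 4) * (a*b*Δ^2) :=
    mul_nonneg (by linarith) (by positivity)
  have hΔsq : 1 ≤ Δ^2 := aux_one_le_sq Δ hΔ1
  have hh3 : (0:ℝ) ≤ (Δ^2 - 1) * (a*b) :=
    mul_nonneg (by linarith) (by positivity)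
  have hh4 : (0:ℝ) ≤ a*b*(1-Δ)^2 := by positivity
  have htarget : 2*b*((b*(1-Δ)^2 + a*Δ^2)+(b*(1-Δ)^2 + a)) + a*(b*(1-Δ)^2 + a*Δ^2)
      ≤ (b*(1-Δ)^2 + a*Δ^2)*(b*(1-Δ)^2 + a) := by linarith
  have hmul : a*b*(b*(u₂+u₃)^2 + a*u₂^2) ≤ a*b*(a*b*(u₂^2*u₃^2)) := by
    linarith [hPP, h1, h2, h3, hP, htarget]
  exact le_of_mul_le_mul_left hmul (mul_pos ha hb)

lemma aux_chord_e (a b u₂ u₃ z1 z2 : ℝ) (ha : 0 < a) (hb : 0 < b)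
    (hu2 : 0 < u₂) (hu3 : 0 < u₃)
    (hcond : b*(u₂+u₃)^2 + a*u₂^2 ≤ a*b*(u₂^2*u₃^2))
    (hsum : (u₂+u₃)*z1 - u₂*(z1-z2) = u₂*u₃) :
    1 ≤ a*z1^2 + b*(z1-z2)^2 := by
  have hcs := cs_dual a b (u₂+u₃) u₂ z1 (z1-z2)
  rw [hsum] at hcs
  have hez : 0 ≤ a*z1^2 + b*(z1-z2)^2 := by positivity
  have hABpos : (0:ℝ) < a*b*(u₂^2*u₃^2) := by positivity
  nlinarith [hcs, mul_nonneg (sub_nonneg.2 hcond) hez]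

lemma aux_bell (a b Y1 Y2 z1 z2 : ℝ) (ha : 0 < a) (hb : 0 < b)
    (hY : a*Y1^2+b*(Y1-Y2)^2 = 1) (hz : a*z1^2+b*(z1-z2)^2 = 1) :
    (2*a*Y1+2*b*(Y1-Y2))*z1 + (-(2*b*(Y1-Y2)))*z2 ≤ 2 := by
  have hcs := cs_aux a b Y1 Y2 z1 z2 ha.le hb.le
  rw [hY, hz, one_mul] at hcs
  nlinarith [hcs, sq_nonneg (a*Y1*z1 + b*(Y1-Y2)*(z1-z2) - 1)]

/-- for all sufficiently large `Δ` there are constants `c₀ > 0`, `κ > 0`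
such that for every `y ≠ 0` whose projection `y* = y/φ(y)` lies on the elliptic arc
and every `w` with `‖w − y‖ ≤ κ‖y‖`, one has
`|φ(w) − ⟨∇φ(y*), w⟩| ≤ (c₀/φ(y))·‖w − y‖²`, where `∇φ(y*) = n(y*)/⟨y*, n(y*)⟩`. -/
theorem stmt8 (a b : ℝ) (ha : 0 < a) (hb : 0 < b) :
    ∃ Δ₀ > (0 : ℝ), ∀ Δ > Δ₀, ∀ u₂ u₃ : ℝ, ∀ T₂ T₃ : ℝ × ℝ,
      GoodConfig a b Δ u₂ u₃ T₂ T₃ →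
      ∀ n : ℝ × ℝ → ℝ × ℝ, IsN a b Δ u₂ u₃ T₂ T₃ n →
      ∀ φ : ℝ × ℝ → ℝ, IsPhi (contourL a b Δ u₂ u₃ T₂ T₃) φ →
      ∃ c₀ > (0 : ℝ), ∃ κ > (0 : ℝ), ∀ y : ℝ × ℝ, y ≠ 0 →
        (φ y)⁻¹ • y ∈ arcE a b Δ →
        ∀ w : ℝ × ℝ, enorm2 (w - y) ≤ κ * enorm2 y →
          |φ w - dotp ((dotp ((φ y)⁻¹ • y) (n ((φ y)⁻¹ • y)))⁻¹ • n ((φ y)⁻¹ • y)) w|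
            ≤ c₀ / φ y * enorm2 (w - y) ^ 2 := by
  have hM : (0:ℝ) < a + 2*b := by linarith
  refine ⟨3 + Real.sqrt (a/b), by positivity, ?_⟩
  intro Δ hΔ u₂ u₃ T₂ T₃ hGC n hn φ hφ
  obtain ⟨⟨heT2, hT22, c, hc, hgT2⟩, ⟨heT3, hT31, hT32, c', hc', hgT3⟩,
    hu₂, hu₃, htan2, htan3⟩ := hGC
  have hcR : (0:ℝ) < (c:ℝ) := by exact_mod_cast hc
  have hcR' : (0:ℝ) < (c':ℝ) := by exact_mod_cast hc'
  have heT2' : a*T₂.1^2 + b*(T₂.1-T₂.2)^2 = 1 := heT2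
  have heT3' : a*T₃.1^2 + b*(T₃.1-T₃.2)^2 = 1 := heT3
  -- Δ facts
  have hs2 : Real.sqrt (a/b) ^ 2 = a/b := Real.sq_sqrt (by positivity)
  have hsnn : 0 ≤ Real.sqrt (a/b) := Real.sqrt_nonneg _
  have hΔ1 : 1 ≤ Δ := by linarith
  have hS4 : 4 ≤ (1-Δ)^2 := by nlinarith
  have hbs : b * Real.sqrt (a/b)^2 = a := by rw [hs2]; field_simp
  have hSab : 4*b + a ≤ b*(1-Δ)^2 := by
    have h1 : (0:ℝ) ≤ (Δ-1)^2 - (2+Real.sqrt (a/b))^2 := by nlinarith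
    have h2 : 0 ≤ b*((Δ-1)^2 - (2+Real.sqrt (a/b))^2) := mul_nonneg hb.le h1
    nlinarith [h2, hbs, hsnn]
  -- gradient components at T₂, T₃
  have hg21 : 2*a*T₂.1 + 2*b*(T₂.1 - T₂.2) = c := by
    have h := congrArg Prod.fst hgT2; simp [gradE] at h; linarith
  have hg22 : 2*b*(T₂.1 - T₂.2) = c*Δ := by
    have h := congrArg Prod.snd hgT2; simp [gradE] at h; linarith
  have hg31 : 2*a*T₃.1 + 2*b*(T₃.1 - T₃.2) = -((c':ℝ)*Δ) := by
    have h := congrArg Prod.fst hgT3; simp [gradE] at h; linarith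
  have hg32 : 2*b*(T₃.1 - T₃.2) = -(c':ℝ) := by
    have h := congrArg Prod.snd hgT3; simp [gradE] at h; linarith
  -- tangency conditions
  have hu2eq : u₂ = T₂.1 - Δ*T₂.2 := by
    rw [hgT2] at htan2
    simp [dotp] at htan2
    have hkey : (c:ℝ) * (u₂ - (T₂.1 - Δ*T₂.2)) = 0 := by linear_combination htan2
    rcases mul_eq_zero.mp hkey with h' | h'
    · exact absurd h' hcR.ne'
    · linarith
  have hu3eq : u₃ = T₃.2 - Δ*T₃.1 := by
    rw [hgT3] at htan3
    simp [dotp] at htan3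
    have hkey : (c':ℝ) * (u₃ - (T₃.2 - Δ*T₃.1)) = 0 := by linear_combination htan3
    rcases mul_eq_zero.mp hkey with h' | h'
    · exact absurd h' hcR'.ne'
    · linarith
  have hcu2 : (c:ℝ)*u₂ = 2 := by
    linear_combination (c:ℝ)*hu2eq - T₂.1*hg21 + T₂.2*hg22 + 2*heT2'
  have hcu3 : (c':ℝ)*u₃ = 2 := by
    linear_combination (c':ℝ)*hu3eq - T₃.1*hg31 + T₃.2*hg32 + 2*heT3'
  -- closed forms for a*b*u²
  have h2ap : 2*a*T₂.1 = (c:ℝ)*(1-Δ) := by linear_combination hg21 - hg22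
  have h2ap3 : 2*a*T₃.1 = (c':ℝ)*(1-Δ) := by linear_combination hg31 - hg32
  have h4ab : (c:ℝ)^2*(b*(1-Δ)^2 + a*Δ^2) = 4*a*b := by
    linear_combination (4*a*b)*heT2' - b*(2*a*T₂.1 + (c:ℝ)*(1-Δ))*h2ap -
      a*(2*b*(T₂.1-T₂.2) + (c:ℝ)*Δ)*hg22
  have h4ab3 : (c':ℝ)^2*(b*(1-Δ)^2 + a) = 4*a*b := by
    linear_combination (4*a*b)*heT3' - b*(2*a*T₃.1 + (c':ℝ)*(1-Δ))*h2ap3 -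
      a*(2*b*(T₃.1-T₃.2) - (c':ℝ))*hg32
  have hc2u2 : (c:ℝ)^2*u₂^2 = 4 := by linear_combination ((c:ℝ)*u₂ + 2)*hcu2
  have hc2u3 : (c':ℝ)^2*u₃^2 = 4 := by linear_combination ((c':ℝ)*u₃ + 2)*hcu3
  have habu2 : a*b*u₂^2 = b*(1-Δ)^2 + a*Δ^2 := by
    have h : (c:ℝ)^2*(a*b*u₂^2) = (c:ℝ)^2*(b*(1-Δ)^2 + a*Δ^2) := by
      linear_combination (a*b)*hc2u2 - h4ab
    exact mul_left_cancel₀ (pow_ne_zero 2 hcR.ne') h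
  have habu3 : a*b*u₃^2 = b*(1-Δ)^2 + a := by
    have h : (c':ℝ)^2*(a*b*u₃^2) = (c':ℝ)^2*(b*(1-Δ)^2 + a) := by
      linear_combination (a*b)*hc2u3 - h4ab3
    exact mul_left_cancel₀ (pow_ne_zero 2 hcR'.ne') h
  have hcond := aux_chord_cond a b Δ u₂ u₃ ha hb hΔ1 hS4 hSab habu2 habu3
  -- eF ≥ 1 on the contour
  have hLe : ∀ z ∈ contourL a b Δ u₂ u₃ T₂ T₃, 1 ≤ eF a b z := by
    rintro z (((hz | hz) | hz) | hz)
    · -- chord from K₃ to K₂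
      obtain ⟨α, β, hα, hβ, hαβ, hzeq⟩ := hz
      have hz1 : z.1 = β*u₂ := by rw [← hzeq]; simp
      have hz2 : z.2 = α*u₃ := by rw [← hzeq]; simp
      have hsum : (u₂+u₃)*z.1 - u₂*(z.1-z.2) = u₂*u₃ := by
        rw [hz1, hz2]; linear_combination (u₂*u₃)*hαβ
      exact aux_chord_e a b u₂ u₃ z.1 z.2 ha hb hu₂ hu₃ hcond hsum
    · -- segment from K₂ to T₂
      obtain ⟨α, β, hα, hβ, hαβ, hzeq⟩ := hz
      have hz1 : z.1 = α*u₂ + β*T₂.1 := by rw [← hzeq]; simp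
      have hz2 : z.2 = β*T₂.2 := by rw [← hzeq]; simp
      show (1:ℝ) ≤ a*z.1^2 + b*(z.1-z.2)^2
      have hβ1 : β = 1 - α := by linarith
      subst hβ1
      have hkey : a*z.1^2 + b*(z.1-z.2)^2
          = 1 + a*(α*T₂.2*Δ)^2 + b*(α*T₂.2*(Δ-1))^2 := by
        rw [hz1, hz2, hu2eq]
        linear_combination heT2' - α*T₂.2*Δ*hg21 + α*T₂.2*hg22
      linarith [hkey, mul_nonneg ha.le (sq_nonneg (α*T₂.2*Δ)),
        mul_nonneg hb.le (sq_nonneg (α*T₂.2*(Δ-1)))]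
    · -- arc
      exact le_of_eq hz.1.symm
    · -- segment from T₃ to K₃
      obtain ⟨α, β, hα, hβ, hαβ, hzeq⟩ := hz
      have hz1 : z.1 = α*T₃.1 := by rw [← hzeq]; simp
      have hz2 : z.2 = α*T₃.2 + β*u₃ := by rw [← hzeq]; simp
      show (1:ℝ) ≤ a*z.1^2 + b*(z.1-z.2)^2
      have hα1 : α = 1 - β := by linarith
      subst hα1
      have hkey : a*z.1^2 + b*(z.1-z.2)^2
          = 1 + a*(β*T₃.1)^2 + b*(β*T₃.1*(1-Δ))^2 := by
        rw [hz1, hz2, hu3eq]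
        linear_combination heT3' - β*T₃.1*hg31 + β*T₃.1*Δ*hg32
      linarith [hkey, mul_nonneg ha.le (sq_nonneg (β*T₃.1)),
        mul_nonneg hb.le (sq_nonneg (β*T₃.1*(1-Δ)))]
  -- choice of constants
  refine ⟨a+2*b, hM, Real.sqrt (a*b/(8*(a+2*b)^2)), Real.sqrt_pos.mpr (by positivity), ?_⟩
  intro y hy hyarc w hw
  obtain ⟨hty, hyL⟩ := hφ.2 y hy
  obtain ⟨heY, c₂, c₃, hc₂, hc₃, hgY⟩ := hyarc
  have hyarc2 : (φ y)⁻¹ • y ∈ arcE a b Δ := ⟨heY, c₂, c₃, hc₂, hc₃, hgY⟩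
  set κ := Real.sqrt (a*b/(8*(a+2*b)^2)) with hκdef
  have hκ2 : κ^2 = a*b/(8*(a+2*b)^2) := Real.sq_sqrt (by positivity)
  set Y := (φ y)⁻¹ • y with hYdef
  have heY' : a*Y.1^2 + b*(Y.1-Y.2)^2 = 1 := heY
  have hGY1 : 2*a*Y.1 + 2*b*(Y.1-Y.2) = c₂ - c₃*Δ := by
    have h := congrArg Prod.fst hgY; simp [gradE] at h; linarith
  have hGY2 : -(2*b*(Y.1-Y.2)) = c₃ - c₂*Δ := by
    have h := congrArg Prod.snd hgY; simp [gradE] at h; linarith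
  have hEuler : Y.1*(2*a*Y.1+2*b*(Y.1-Y.2)) + Y.2*(-(2*b*(Y.1-Y.2))) = 2 := by
    linear_combination 2*heY'
  have hgg : 0 < (2*a*Y.1+2*b*(Y.1-Y.2))^2 + (-(2*b*(Y.1-Y.2)))^2 :=
    aux_gradpos _ _ _ _ hEuler
  have hnY := hn.1 Y hyarc2
  have hν : 0 < enorm2 (gradE a b Y) := Real.sqrt_pos.mpr hgg
  have hd1 : dotp Y (n Y) = (enorm2 (gradE a b Y))⁻¹ * 2 := by
    rw [hnY]
    show Y.1 * ((enorm2 (gradE a b Y))⁻¹ * (2*a*Y.1+2*b*(Y.1-Y.2))) +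
         Y.2 * ((enorm2 (gradE a b Y))⁻¹ * (-(2*b*(Y.1-Y.2)))) = _
    linear_combination (enorm2 (gradE a b Y))⁻¹ * hEuler
  have hterm : dotp ((dotp Y (n Y))⁻¹ • n Y) w
      = ((2*a*Y.1+2*b*(Y.1-Y.2))*w.1 + (-(2*b*(Y.1-Y.2)))*w.2)/2 := by
    rw [hd1, hnY]
    show ((enorm2 (gradE a b Y))⁻¹*2)⁻¹ * ((enorm2 (gradE a b Y))⁻¹ * (2*a*Y.1+2*b*(Y.1-Y.2))) * w.1 +
         ((enorm2 (gradE a b Y))⁻¹*2)⁻¹ * ((enorm2 (gradE a b Y))⁻¹ * (-(2*b*(Y.1-Y.2)))) * w.2 = _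
    field_simp
  rw [hterm]
  set t := φ y with htdef
  -- the tangent-line bound on the contour
  have hBell2 : (2*a*Y.1+2*b*(Y.1-Y.2))*T₂.1 + (-(2*b*(Y.1-Y.2)))*T₂.2 ≤ 2 :=
    aux_bell a b Y.1 Y.2 T₂.1 T₂.2 ha hb heY' heT2'
  have hBell3 : (2*a*Y.1+2*b*(Y.1-Y.2))*T₃.1 + (-(2*b*(Y.1-Y.2)))*T₃.2 ≤ 2 :=
    aux_bell a b Y.1 Y.2 T₃.1 T₃.2 ha hb heY' heT3'
  have hΔsq : 1 ≤ Δ^2 := aux_one_le_sq Δ hΔ1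
  have hBu2 : (2*a*Y.1+2*b*(Y.1-Y.2))*u₂ ≤ 2 := by
    have hfac : Δ*(2*a*Y.1+2*b*(Y.1-Y.2)) + (-(2*b*(Y.1-Y.2))) = c₃*(1-Δ^2) := by
      linear_combination Δ*hGY1 + hGY2
    have h1 : c₃*(1-Δ^2) ≤ 0 := mul_nonpos_of_nonneg_of_nonpos hc₃ (by linarith)
    have h2 : (-T₂.2)*(c₃*(1-Δ^2)) ≤ 0 :=
      mul_nonpos_of_nonneg_of_nonpos (by linarith) h1
    have h3 : (2*a*Y.1+2*b*(Y.1-Y.2))*u₂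
        = ((2*a*Y.1+2*b*(Y.1-Y.2))*T₂.1 + (-(2*b*(Y.1-Y.2)))*T₂.2)
          + (-T₂.2)*(Δ*(2*a*Y.1+2*b*(Y.1-Y.2)) + (-(2*b*(Y.1-Y.2)))) := by
      rw [hu2eq]; ring
    rw [hfac] at h3
    linarith [hBell2, h2, h3]
  have hBu3 : (-(2*b*(Y.1-Y.2)))*u₃ ≤ 2 := by
    have hfac : (2*a*Y.1+2*b*(Y.1-Y.2)) + Δ*(-(2*b*(Y.1-Y.2))) = c₂*(1-Δ^2) := by
      linear_combination hGY1 + Δ*hGY2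
    have h1 : c₂*(1-Δ^2) ≤ 0 := mul_nonpos_of_nonneg_of_nonpos hc₂ (by linarith)
    have h2 : (-T₃.1)*(c₂*(1-Δ^2)) ≤ 0 :=
      mul_nonpos_of_nonneg_of_nonpos (by linarith) h1
    have h3 : (-(2*b*(Y.1-Y.2)))*u₃
        = ((2*a*Y.1+2*b*(Y.1-Y.2))*T₃.1 + (-(2*b*(Y.1-Y.2)))*T₃.2)
          + (-T₃.1)*((2*a*Y.1+2*b*(Y.1-Y.2)) + Δ*(-(2*b*(Y.1-Y.2)))) := by
      rw [hu3eq]; ring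
    rw [hfac] at h3
    linarith [hBell3, h2, h3]
  have hLB : ∀ z ∈ contourL a b Δ u₂ u₃ T₂ T₃,
      (2*a*Y.1+2*b*(Y.1-Y.2))*z.1 + (-(2*b*(Y.1-Y.2)))*z.2 ≤ 2 := by
    rintro z (((hz | hz) | hz) | hz)
    · obtain ⟨α, β, hα, hβ, hαβ, hzeq⟩ := hz
      have hz1 : z.1 = β*u₂ := by rw [← hzeq]; simp
      have hz2 : z.2 = α*u₃ := by rw [← hzeq]; simp
      rw [hz1, hz2]
      have p1 := mul_le_mul_of_nonneg_left hBu2 hβ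
      have p2 := mul_le_mul_of_nonneg_left hBu3 hα
      linarith [p1, p2]
    · obtain ⟨α, β, hα, hβ, hαβ, hzeq⟩ := hz
      have hz1 : z.1 = α*u₂ + β*T₂.1 := by rw [← hzeq]; simp
      have hz2 : z.2 = β*T₂.2 := by rw [← hzeq]; simp
      rw [hz1, hz2]
      have p1 := mul_le_mul_of_nonneg_left hBu2 hα
      have p2 := mul_le_mul_of_nonneg_left hBell2 hβ
      linarith [p1, p2]
    · exact aux_bell a b Y.1 Y.2 z.1 z.2 ha hb heY' hz.1
    · obtain ⟨α, β, hα, hβ, hαβ, hzeq⟩ := hz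
      have hz1 : z.1 = α*T₃.1 := by rw [← hzeq]; simp
      have hz2 : z.2 = α*T₃.2 + β*u₃ := by rw [← hzeq]; simp
      rw [hz1, hz2]
      have p1 := mul_le_mul_of_nonneg_left hBell3 hα
      have p2 := mul_le_mul_of_nonneg_left hBu3 hβ
      linarith [p1, p2]
  by_cases hw0 : w = 0
  · subst hw0
    rw [hφ.1]
    have h0 : (0:ℝ) ≤ (a+2*b)/t * enorm2 ((0:ℝ×ℝ) - y)^2 :=
      mul_nonneg (div_nonneg hM.le hty.le) (sq_nonneg _)
    simpa using h0
  · obtain ⟨htw, hwL⟩ := hφ.2 w hw0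
    have hy1 : y.1 = t*Y.1 := by
      rw [hYdef]
      show y.1 = t*(t⁻¹ * y.1)
      field_simp
    have hy2 : y.2 = t*Y.2 := by
      rw [hYdef]
      show y.2 = t*(t⁻¹ * y.2)
      field_simp
    have hr0 : 0 ≤ enorm2 (w - y) := Real.sqrt_nonneg _
    have hr2 : enorm2 (w-y)^2 = (w.1-y.1)^2 + (w.2-y.2)^2 := Real.sq_sqrt (by positivity)
    have hny2 : enorm2 y^2 = y.1^2 + y.2^2 := Real.sq_sqrt (by positivity)
    have hr2' : enorm2 (w-y)^2 ≤ κ^2 * (y.1^2+y.2^2) := by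
      calc enorm2 (w-y)^2 ≤ (κ * enorm2 y)^2 := pow_le_pow_left₀ hr0 hw 2
        _ = κ^2*(y.1^2+y.2^2) := by rw [mul_pow, hny2]
    have hey : a*y.1^2 + b*(y.1-y.2)^2 = t^2 := by
      rw [hy1, hy2]; linear_combination t^2*heY'
    have hnormy : a*b*(y.1^2+y.2^2) ≤ 2*(a+2*b)*t^2 := aux_normy a b y.1 y.2 t ha hb hey
    have h4M : 4*(a+2*b)*((w.1-y.1)^2 + (w.2-y.2)^2) ≤ t^2 := by
      have h8 : (0:ℝ) < 8*(a+2*b)^2 := by positivity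
      rw [hκ2] at hr2'
      have h1 : 8*(a+2*b)^2 * (enorm2 (w-y)^2) ≤ a*b*(y.1^2+y.2^2) := by
        have h2 := mul_le_mul_of_nonneg_left hr2' h8.le
        calc 8*(a+2*b)^2 * (enorm2 (w-y)^2)
            ≤ 8*(a+2*b)^2 * (a*b/(8*(a+2*b)^2)*(y.1^2+y.2^2)) := h2
          _ = a*b*(y.1^2+y.2^2) := by field_simp
      rw [hr2] at h1
      have h3 : (2*(a+2*b))*(4*(a+2*b)*((w.1-y.1)^2 + (w.2-y.2)^2))
          ≤ (2*(a+2*b))*t^2 := by linarith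
      exact le_of_mul_le_mul_left h3 (by linarith)
    have hcsB := cs_aux a b Y.1 Y.2 (w.1-y.1) (w.2-y.2) ha.le hb.le
    rw [heY', one_mul] at hcsB
    have hB2 : (a*Y.1*(w.1-y.1) + b*(Y.1-Y.2)*((w.1-y.1)-(w.2-y.2)))^2 ≤ t^2/4 := by
      have h := aux_heh a b (w.1-y.1) (w.2-y.2) ha hb
      linarith [hcsB, h, h4M]
    obtain ⟨hBl, hBu⟩ := aux_abs_le _ _ hty.le hB2
    have hBw : (2*a*Y.1+2*b*(Y.1-Y.2))*w.1 + (-(2*b*(Y.1-Y.2)))*w.2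
        = 2*(t + (a*Y.1*(w.1-y.1) + b*(Y.1-Y.2)*((w.1-y.1)-(w.2-y.2)))) := by
      linear_combination t*hEuler + (2*a*Y.1+2*b*(Y.1-Y.2))*hy1 + (-(2*b*(Y.1-Y.2)))*hy2
    have hefw : a*w.1^2 + b*(w.1-w.2)^2
        = t^2 + 2*t*(a*Y.1*(w.1-y.1) + b*(Y.1-Y.2)*((w.1-y.1)-(w.2-y.2)))
          + (a*(w.1-y.1)^2 + b*((w.1-y.1)-(w.2-y.2))^2) := by
      rw [hy1, hy2]
      linear_combination t^2*heY'
    have hWe : 1 ≤ a*((φ w)⁻¹*w.1)^2 + b*((φ w)⁻¹*w.1 - (φ w)⁻¹*w.2)^2 := hLe _ hwL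
    have hpw2 : (φ w)^2 ≤ a*w.1^2 + b*(w.1-w.2)^2 := by
      have h := mul_le_mul_of_nonneg_left hWe (sq_nonneg (φ w))
      calc (φ w)^2 = (φ w)^2 * 1 := by ring
        _ ≤ (φ w)^2 * (a*((φ w)⁻¹*w.1)^2 + b*((φ w)⁻¹*w.1 - (φ w)⁻¹*w.2)^2) := h
        _ = a*w.1^2 + b*(w.1-w.2)^2 := by field_simp
    have hew : a*w.1^2 + b*(w.1-w.2)^2
        ≤ t^2 + 2*t*(a*Y.1*(w.1-y.1) + b*(Y.1-Y.2)*((w.1-y.1)-(w.2-y.2)))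
          + (a+2*b)*(enorm2 (w-y))^2 := by
      rw [hr2]
      linarith [hefw, aux_heh a b (w.1-y.1) (w.2-y.2) ha hb]
    have hupt : t*(φ w) ≤ t^2 + t*(a*Y.1*(w.1-y.1) + b*(Y.1-Y.2)*((w.1-y.1)-(w.2-y.2)))
        + (a+2*b)*(enorm2 (w-y))^2 :=
      aux_upper t _ ((a+2*b)*(enorm2 (w-y))^2) (φ w) (a*w.1^2+b*(w.1-w.2)^2)
        hty hBl (by positivity) htw.le hpw2 hew
    have hWB := hLB ((φ w)⁻¹ • w) hwL
    have hW1 : ((φ w)⁻¹ • w).1 = (φ w)⁻¹*w.1 := rfl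
    have hW2 : ((φ w)⁻¹ • w).2 = (φ w)⁻¹*w.2 := rfl
    rw [hW1, hW2] at hWB
    have hlowm : (2*a*Y.1+2*b*(Y.1-Y.2))*w.1 + (-(2*b*(Y.1-Y.2)))*w.2 ≤ 2*(φ w) := by
      have h := mul_le_mul_of_nonneg_left hWB htw.le
      have hWc : (φ w) * ((2*a*Y.1+2*b*(Y.1-Y.2))*((φ w)⁻¹*w.1)
          + (-(2*b*(Y.1-Y.2)))*((φ w)⁻¹*w.2))
          = (2*a*Y.1+2*b*(Y.1-Y.2))*w.1 + (-(2*b*(Y.1-Y.2)))*w.2 := by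
        field_simp
      linarith [h, hWc]
    have hhalf : ((2*a*Y.1+2*b*(Y.1-Y.2))*w.1 + (-(2*b*(Y.1-Y.2)))*w.2)/2
        = t + (a*Y.1*(w.1-y.1) + b*(Y.1-Y.2)*((w.1-y.1)-(w.2-y.2))) := by
      rw [hBw]; ring
    rw [hhalf]
    have hRHS : 0 ≤ (a+2*b)/t * enorm2 (w-y)^2 :=
      mul_nonneg (div_nonneg hM.le hty.le) (sq_nonneg _)
    rw [abs_le]
    constructor
    · have hl : t + (a*Y.1*(w.1-y.1) + b*(Y.1-Y.2)*((w.1-y.1)-(w.2-y.2))) ≤ φ w := by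
        linarith [hlowm, hBw]
      linarith
    · rw [div_mul_eq_mul_div, le_div_iff₀ hty]
      linarith [hupt]
end
end

section
/- Let α∈ℝ^k, d>0, let F⊆ℝ^k be a measurable set, and let Y be an ℝ^k-valued random variable such that ‖Y−α‖≤d almost surely on the event {Y∈F}. Set M_F = E[(Y−α)·1_{Y∈F}]. Let f:ℝ^k→ℝ be measurable and let ε>0, and suppose there exists an affine function l:ℝ^k→ℝ such that |f(x)−l(x)|<ε for all x with ‖x−α‖≤d. If f(α+M_F)−f(α)<−5ε, then E[(f(Y)−f(α))·1_{Y∈F}]<−ε. -/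
/-!
On the ball `‖x - α‖ ≤ d` the increment `f x - f α` is within `2ε` of the linear part `L` of
the affine approximation, applied to `x - α`. Integrating over the event `{Y ∈ F}`, whose
probability is at most `1`, gives `E[(f(Y) - f(α))·1_{Y∈F}] ≤ L M_F + 2ε`, while evaluating the
same estimate at the point `α + M_F` of the ball gives `L M_F < f(α + M_F) - f(α) + 2ε < -3ε`.
-/

open MeasureTheory Set

section LocalLinearity

variable {E : Type*} [NormedAddCommGroup E] [NormedSpace ℝ E]

theorem AffineMap.abs_sub_sub_linear_lt {f : E → ℝ} {l : E →ᵃ[ℝ] ℝ} {α x : E} {ε : ℝ}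
    (hx : |f x - l x| < ε) (hα : |f α - l α| < ε) :
    |f x - f α - l.linear (x - α)| < 2 * ε := by
  have hl : l.linear (x - α) = l x - l α := l.linearMap_vsub x α
  rw [hl]
  calc |f x - f α - (l x - l α)| = |(f x - l x) - (f α - l α)| := by ring_nf
    _ ≤ |f x - l x| + |f α - l α| := abs_sub _ _
    _ < 2 * ε := by linarith

variable [CompleteSpace E] {Ω : Type*} [MeasurableSpace Ω] {ν : Measure Ω} [IsFiniteMeasure ν]
  {X : Ω → E} {f : E → ℝ} {L : E →L[ℝ] ℝ} {α : E} {d δ : ℝ}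

theorem integral_sub_le_map_integral_add (hν : ν.real univ ≤ 1) (hδ : 0 ≤ δ)
    (hX : AEStronglyMeasurable X ν) (hfX : AEStronglyMeasurable (fun ω ↦ f (X ω)) ν)
    (hbound : ∀ᵐ ω ∂ν, ‖X ω - α‖ ≤ d)
    (hlin : ∀ x, ‖x - α‖ ≤ d → |f x - f α - L (x - α)| < δ) :
    ∫ ω, (f (X ω) - f α) ∂ν ≤ L (∫ ω, (X ω - α) ∂ν) + δ := by
  have hXint : Integrable (fun ω ↦ X ω - α) ν :=
    .of_bound (hX.sub aestronglyMeasurable_const) d hbound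
  have hLint : Integrable (fun ω ↦ L (X ω - α)) ν := L.integrable_comp hXint
  have hclose : ∀ᵐ ω ∂ν, |f (X ω) - f α - L (X ω - α)| < δ := hbound.mono fun ω ↦ hlin _
  have hfint : Integrable (fun ω ↦ f (X ω) - f α) ν := by
    refine (hLint.norm.add (integrable_const δ)).mono' (hfX.sub aestronglyMeasurable_const) ?_
    filter_upwards [hclose] with ω h
    have := abs_sub_abs_le_abs_sub (f (X ω) - f α) (L (X ω - α))
    simp only [Pi.add_apply, Real.norm_eq_abs]
    linarith
  calc ∫ ω, (f (X ω) - f α) ∂ν ≤ ∫ ω, (L (X ω - α) + δ) ∂ν := by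
        refine integral_mono_ae hfint (hLint.add (integrable_const δ)) ?_
        filter_upwards [hclose] with ω h
        linarith [(abs_lt.1 h).2]
    _ = L (∫ ω, (X ω - α) ∂ν) + δ * ν.real univ := by
        rw [integral_add hLint (integrable_const δ), L.integral_comp_comm hXint, integral_const,
          smul_eq_mul, mul_comm]
    _ ≤ L (∫ ω, (X ω - α) ∂ν) + δ := by gcongr; exact mul_le_of_le_one_right hδ hν

theorem integral_sub_lt_sub_add_of_locallyLinear (hν : ν.real univ ≤ 1) (hd : 0 ≤ d)
    (hX : AEStronglyMeasurable X ν) (hfX : AEStronglyMeasurable (fun ω ↦ f (X ω)) ν)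
    (hbound : ∀ᵐ ω ∂ν, ‖X ω - α‖ ≤ d)
    (hlin : ∀ x, ‖x - α‖ ≤ d → |f x - f α - L (x - α)| < δ) :
    ∫ ω, (f (X ω) - f α) ∂ν < f (α + ∫ ω, (X ω - α) ∂ν) - f α + 2 * δ := by
  set M := ∫ ω, (X ω - α) ∂ν
  have hδ : 0 < δ := by simpa using hlin α (by simpa using hd)
  have hM : ‖M‖ ≤ d :=
    (norm_integral_le_of_norm_le_const hbound).trans (mul_le_of_le_one_right hd hν)
  have hLM := abs_lt.1 (hlin (α + M) (by simpa using hM))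
  have hint := integral_sub_le_map_integral_add hν hδ.le hX hfX hbound hlin
  simp only [add_sub_cancel_left] at hLM
  linarith [hLM.1]

end LocalLinearity

theorem stmt9_general {k : ℕ} {Ω : Type*} [MeasurableSpace Ω]
    (μ : Measure Ω) [IsProbabilityMeasure μ]
    (Y : Ω → EuclideanSpace ℝ (Fin k)) (hY : Measurable Y)
    (α : EuclideanSpace ℝ (Fin k)) (d : ℝ) (hd : 0 < d)
    (F : Set (EuclideanSpace ℝ (Fin k))) (hF : MeasurableSet F)
    (hbound : ∀ᵐ ω ∂μ, Y ω ∈ F → ‖Y ω - α‖ ≤ d)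
    (f : EuclideanSpace ℝ (Fin k) → ℝ) (hf : Measurable f)
    (ε : ℝ) (l : EuclideanSpace ℝ (Fin k) →ᵃ[ℝ] ℝ)
    (hl : ∀ x : EuclideanSpace ℝ (Fin k), ‖x - α‖ ≤ d → |f x - l x| < ε)
    (hdrift : f (α + ∫ ω in Y ⁻¹' F, (Y ω - α) ∂μ) - f α < -(5 * ε)) :
    (∫ ω in Y ⁻¹' F, (f (Y ω) - f α) ∂μ) < -ε := by
  have hsub : (μ.restrict (Y ⁻¹' F)).real univ ≤ 1 := by
    rw [measureReal_restrict_apply_univ]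
    exact measureReal_le_one
  have hbound' : ∀ᵐ ω ∂μ.restrict (Y ⁻¹' F), ‖Y ω - α‖ ≤ d := (ae_restrict_iff' (hY hF)).2 hbound
  have hlin : ∀ x, ‖x - α‖ ≤ d →
      |f x - f α - l.linear.toContinuousLinearMap (x - α)| < 2 * ε := fun x hx ↦ by
    simpa using l.abs_sub_sub_linear_lt (hl x hx) (hl α (by simpa using hd.le))
  have := integral_sub_lt_sub_add_of_locallyLinear hsub hd.le hY.aestronglyMeasurable
    (hf.comp hY).aestronglyMeasurable hbound' hlin
  linarith

/-- modified principle of local linearity: if `‖Y − α‖ ≤ d` a.s. on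
the event `{Y ∈ F}`, `f` is within `ε` of an affine function on the ball of radius
`d` around `α`, and `f(α + M_F) − f(α) < −5ε` where `M_F = E[(Y − α)·1_{Y∈F}]`,
then `E[(f(Y) − f(α))·1_{Y∈F}] < −ε`. -/
theorem stmt9 {k : ℕ} {Ω : Type*} [MeasurableSpace Ω]
    (μ : Measure Ω) [IsProbabilityMeasure μ]
    (Y : Ω → EuclideanSpace ℝ (Fin k)) (hY : Measurable Y)
    (α : EuclideanSpace ℝ (Fin k)) (d : ℝ) (hd : 0 < d)
    (F : Set (EuclideanSpace ℝ (Fin k))) (hF : MeasurableSet F)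
    (hbound : ∀ᵐ ω ∂μ, Y ω ∈ F → ‖Y ω - α‖ ≤ d)
    (f : EuclideanSpace ℝ (Fin k) → ℝ) (hf : Measurable f)
    (ε : ℝ) (hε : 0 < ε) (l : EuclideanSpace ℝ (Fin k) →ᵃ[ℝ] ℝ)
    (hl : ∀ x : EuclideanSpace ℝ (Fin k), ‖x - α‖ ≤ d → |f x - l x| < ε)
    (hdrift : f (α + ∫ ω in Y ⁻¹' F, (Y ω - α) ∂μ) - f α < -(5 * ε)) :
    (∫ ω in Y ⁻¹' F, (f (Y ω) - f α) ∂μ) < -ε :=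
  stmt9_general μ Y hY α d hd F hF hbound f hf ε l hl hdrift
end

section
/- Let α∈ℝ^k, d>0, and let Y be an ℝ^k-valued random variable with ‖Y−α‖≤d almost surely. Set M = E[Y]−α. Let f:ℝ^k→ℝ be measurable and let ε>0, and suppose there exists an affine function l:ℝ^k→ℝ such that |f(x)−l(x)|<ε for all x with ‖x−α‖≤d. If f(α+M)−f(α)<−5ε, then E[f(Y)]−f(α)<−ε. -/
open MeasureTheory

/-! On the ball `‖x - α‖ ≤ d`, where `Y` lives, `f` is within `ε` of the affine map `l`, and
expectation commutes with affine maps. Hence `E[f(Y)] ≤ l(E[Y]) + ε < f(E[Y]) + 2ε`, the mean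
`E[Y]` lying in the (convex, closed) ball as well; so a drop of more than `5ε` of `f` from `α` to
`E[Y]` leaves a drop of more than `3ε` in `E[f(Y)]`. -/

section

variable {Ω E F : Type*} [MeasurableSpace Ω] {μ : Measure Ω}

theorem integrable_of_ae_norm_sub_le [NormedAddCommGroup E] [IsFiniteMeasure μ] {Y : Ω → E}
    (hY : AEStronglyMeasurable Y μ) (α : E) {d : ℝ} (h : ∀ᵐ ω ∂μ, ‖Y ω - α‖ ≤ d) :
    Integrable Y μ := by
  have hYα : Integrable (fun ω ↦ Y ω + -α) μ :=
    .of_bound (hY.add aestronglyMeasurable_const) d (by simpa [← sub_eq_add_neg] using h)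
  exact integrable_add_const_iff.mp hYα

variable [NormedAddCommGroup E] [NormedSpace ℝ E] [NormedAddCommGroup F] [NormedSpace ℝ F]

theorem ContinuousAffineMap.integrable_comp [IsFiniteMeasure μ] (l : E →ᴬ[ℝ] F) {Y : Ω → E}
    (hY : Integrable Y μ) : Integrable (fun ω ↦ l (Y ω)) μ := by
  rw [l.decomp]
  exact (l.contLinear.integrable_comp hY).add (integrable_const _)

theorem ContinuousAffineMap.integral_comp_comm [CompleteSpace E] [CompleteSpace F]
    [IsProbabilityMeasure μ] (l : E →ᴬ[ℝ] F) {Y : Ω → E} (hY : Integrable Y μ) :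
    ∫ ω, l (Y ω) ∂μ = l (∫ ω, Y ω ∂μ) := by
  rw [l.decomp]
  simp only [Pi.add_apply, Function.const_apply]
  rw [integral_add (l.contLinear.integrable_comp hY) (integrable_const _),
    l.contLinear.integral_comp_comm hY, integral_const, probReal_univ, one_smul]

theorem abs_integral_sub_affine_integral_le [CompleteSpace E] [IsProbabilityMeasure μ]
    {g : Ω → ℝ} {Y : Ω → E} (l : E →ᴬ[ℝ] ℝ) {ε : ℝ} (hg : AEStronglyMeasurable g μ)
    (hY : Integrable Y μ) (h : ∀ᵐ ω ∂μ, |g ω - l (Y ω)| ≤ ε) :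
    |(∫ ω, g ω ∂μ) - l (∫ ω, Y ω ∂μ)| ≤ ε := by
  have hlY := l.integrable_comp hY
  have hgl : Integrable (fun ω ↦ g ω - l (Y ω)) μ :=
    .of_bound (hg.sub hlY.aestronglyMeasurable) ε h
  have hgi : Integrable g μ := (hgl.add hlY).congr (.of_forall fun ω ↦ sub_add_cancel _ _)
  rw [← l.integral_comp_comm hY, ← integral_sub hgi hlY]
  simpa using norm_integral_le_of_norm_le_const (f := fun ω ↦ g ω - l (Y ω)) h

end

theorem stmt10_general {k : ℕ} {Ω : Type*} [MeasurableSpace Ω]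
    (μ : Measure Ω) [IsProbabilityMeasure μ]
    (Y : Ω → EuclideanSpace ℝ (Fin k)) (hY : Measurable Y)
    (α : EuclideanSpace ℝ (Fin k)) (d : ℝ)
    (hbound : ∀ᵐ ω ∂μ, ‖Y ω - α‖ ≤ d)
    (f : EuclideanSpace ℝ (Fin k) → ℝ) (hf : Measurable f)
    (ε : ℝ) (l : EuclideanSpace ℝ (Fin k) →ᵃ[ℝ] ℝ)
    (hl : ∀ x : EuclideanSpace ℝ (Fin k), ‖x - α‖ ≤ d → |f x - l x| < ε)
    (hdrift : f (α + ((∫ ω, Y ω ∂μ) - α)) - f α < -(5 * ε)) :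
    (∫ ω, f (Y ω) ∂μ) - f α < -ε := by
  let L : EuclideanSpace ℝ (Fin k) →ᴬ[ℝ] ℝ := ⟨l, l.continuous_of_finiteDimensional⟩
  have hYi := integrable_of_ae_norm_sub_le hY.aestronglyMeasurable α hbound
  have hmean : ‖(∫ ω, Y ω ∂μ) - α‖ ≤ d := by
    refine mem_closedBall_iff_norm.mp <| (convex_closedBall α d).integral_mem
      Metric.isClosed_closedBall ?_ hYi
    exact hbound.mono fun ω ↦ mem_closedBall_iff_norm.mpr
  have hfY : |(∫ ω, f (Y ω) ∂μ) - l (∫ ω, Y ω ∂μ)| ≤ ε :=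
    abs_integral_sub_affine_integral_le L (hf.comp hY).aestronglyMeasurable hYi
      (hbound.mono fun ω h ↦ (hl (Y ω) h).le)
  rw [add_sub_cancel] at hdrift
  linarith [abs_le.mp hfY, abs_lt.mp (hl _ hmean)]

/-- principle of local linearity: if `‖Y − α‖ ≤ d` a.s., `f` is
within `ε` of an affine function on the ball of radius `d` around `α`, and
`f(α + M) − f(α) < −5ε` where `M = E[Y] − α`, then `E[f(Y)] − f(α) < −ε`. -/
theorem stmt10 {k : ℕ} {Ω : Type*} [MeasurableSpace Ω]
    (μ : Measure Ω) [IsProbabilityMeasure μ]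
    (Y : Ω → EuclideanSpace ℝ (Fin k)) (hY : Measurable Y)
    (α : EuclideanSpace ℝ (Fin k)) (d : ℝ) (hd : 0 < d)
    (hbound : ∀ᵐ ω ∂μ, ‖Y ω - α‖ ≤ d)
    (f : EuclideanSpace ℝ (Fin k) → ℝ) (hf : Measurable f)
    (ε : ℝ) (hε : 0 < ε) (l : EuclideanSpace ℝ (Fin k) →ᵃ[ℝ] ℝ)
    (hl : ∀ x : EuclideanSpace ℝ (Fin k), ‖x - α‖ ≤ d → |f x - l x| < ε)
    (hdrift : f (α + ((∫ ω, Y ω ∂μ) - α)) - f α < -(5 * ε)) :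
    (∫ ω, f (Y ω) ∂μ) - f α < -ε :=
  stmt10_general μ Y hY α d hbound f hf ε l hl hdrift
end

section
/- For all sufficiently large Δ>0 (with the contour L and the function φ constructed for this Δ): (1) for every y=(y₂,y₃)∈ℤ² with y₂>0 and y₃>0, Σ_z s_{yz}·(φ(z)−φ(y)) = (λ₂−λ₁)/u₂ + (λ₃−λ₁)/u₃, a value independent of y; (2) there exist constants C>0 and γ>0 such that for every y∈ℤ² with y₂>0, y₃>0 and φ(y)>C, Σ_z r_{yz}·(φ(z)−φ(y)) ≤ −γ·φ(y). -/
noncomputable section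

/-- Coercion of an integer lattice point to `ℝ × ℝ`. -/
def iv (y : ℤ × ℤ) : ℝ × ℝ := ((y.1 : ℝ), (y.2 : ℝ))

/-- Free-dynamics part `s_{yz}` of the transition probabilities of the embedded
relative-coordinate chain of the three-processor cascade model. -/
def sker (l1 l2 l3 : ℝ) (y z : ℤ × ℤ) : ℝ :=
  (if z = y + (1, 0) then l2 else 0) + (if z = y + (0, 1) then l3 else 0) +
    (if z = y - (1, 1) then l1 else 0)

/-- Rollback part `r_{yz}` of the transition probabilities of the embedded
relative-coordinate chain of the three-processor cascade model
(`b2 = λ₂/(λ₂+β₁₂)`). -/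
def rker (b12 b23 b2 : ℝ) (y z : ℤ × ℤ) : ℝ :=
  (if 0 < y.1 ∧ y.2 ≤ 0 ∧ z = (0, y.2) then b12 else 0) +
  (if y.1 < y.2 ∧ z = (y.1, y.1) then b23 else 0) +
  (if 0 < y.2 ∧ y.2 ≤ y.1 ∧ z.1 = 0 ∧ 0 ≤ z.2 ∧ z.2 < y.2 then
      b12 * (1 - b2) ^ z.2.toNat * b2 else 0) +
  (if 0 < y.2 ∧ y.2 ≤ y.1 ∧ z = (0, y.2) then b12 * (1 - b2) ^ y.2.toNat else 0) +
  (if 0 < y.1 ∧ y.1 < y.2 ∧ z.1 = 0 ∧ 0 ≤ z.2 ∧ z.2 ≤ y.1 then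
      b12 * (1 - b2) ^ z.2.toNat * b2 else 0) +
  (if 0 < y.1 ∧ y.1 < y.2 ∧ z = (0, y.2) then b12 * (1 - b2) ^ (y.1.toNat + 1) else 0)

/-- Total transition probability `p_{yz}` of the embedded relative-coordinate chain:
for `z ≠ y` it is `s_{yz} + r_{yz}`, and the remaining probability mass is assigned
to staying at `y`. -/
def pker (l1 l2 l3 b12 b23 b2 : ℝ) (y z : ℤ × ℤ) : ℝ :=
  sker l1 l2 l3 y z + rker b12 b23 b2 y z +
    (if z = y then 1 - ∑' w : ℤ × ℤ, (sker l1 l2 l3 y w + rker b12 b23 b2 y w) else 0)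

/-!
In the closed positive quadrant the contour `L` consists only of the segment `K₃K₂`: the
segments `K₂T₂`, `T₃K₃` touch it only at their endpoints `K₂`, `K₃`, and the elliptic arc lies
in `{y₂ < 0}` once `Δ > 1`. Hence `φ(y) = y₂/u₂ + y₃/u₃` there. The free moves from a point
of the open quadrant stay in the closed quadrant, so their drift is the constant obtained from
this linear form. Every rollback target `z` satisfies `0 ≤ z ≤ y` coordinatewise, so each
rollback term is `≤ 0`, and the jump to the origin, of probability `β₁₂ b₂`, alone contributes
`-β₁₂ b₂ φ(y)`.
-/

open Set

lemma eq_left_of_mem_segment_of_map_nonneg {E : Type*} [AddCommGroup E] [Module ℝ E]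
    (f : E →ₗ[ℝ] ℝ) {x T p : E} (hp : p ∈ segment ℝ x T) (hx : f x = 0) (hT : f T < 0)
    (hfp : 0 ≤ f p) : p = x := by
  obtain ⟨α, β, -, hβ, hαβ, rfl⟩ := hp
  simp only [map_add, map_smul, hx, smul_eq_mul, mul_zero, zero_add] at hfp
  obtain rfl : β = 0 := le_antisymm (nonpos_of_mul_nonneg_left hfp hT) hβ
  obtain rfl : α = 1 := by linarith
  simp

lemma segment_axes_intercept {u v : ℝ} (hu : u ≠ 0) (hv : v ≠ 0) {q : ℝ × ℝ}
    (hq : q ∈ segment ℝ ((0, v) : ℝ × ℝ) ((u, 0) : ℝ × ℝ)) : q.1 / u + q.2 / v = 1 := by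
  obtain ⟨α, β, -, -, hαβ, rfl⟩ := hq
  simp only [Prod.fst_add, Prod.snd_add, Prod.smul_fst, Prod.smul_snd, smul_eq_mul]
  field_simp
  linear_combination u * v * hαβ

lemma dotp_gradE_self (a b : ℝ) (y : ℝ × ℝ) : dotp y (gradE a b y) = 2 * eF a b y := by
  simp only [dotp, gradE, eF]
  ring

lemma arcE_fst_neg {a b Δ : ℝ} (ha : 0 < a) (hΔ : 1 < Δ) {q : ℝ × ℝ} (hq : q ∈ arcE a b Δ) :
    q.1 < 0 := by
  obtain ⟨he, c₂, c₃, hc₂, hc₃, hgrad⟩ := hq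
  have h₁ := congrArg Prod.fst hgrad
  have h₂ := congrArg Prod.snd hgrad
  simp only [gradE, Prod.fst_add, Prod.snd_add, Prod.smul_fst, Prod.smul_snd, smul_eq_mul]
    at h₁ h₂
  -- adding the two components of `∇e` leaves `2 a q₁ = (1 - Δ)(c₂ + c₃) ≤ 0`
  by_contra! hq₁
  have hc₂0 : c₂ = 0 := by nlinarith
  have hc₃0 : c₃ = 0 := by nlinarith
  have hgrad0 : gradE a b q = 0 := by simp [hgrad, hc₂0, hc₃0]
  have := dotp_gradE_self a b q
  simp [hgrad0, he, dotp] at this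

lemma GoodConfig.contourL_quadrant {a b Δ u₂ u₃ : ℝ} {T₂ T₃ : ℝ × ℝ}
    (hg : GoodConfig a b Δ u₂ u₃ T₂ T₃) (ha : 0 < a) (hΔ : 1 < Δ) :
    ∀ q ∈ contourL a b Δ u₂ u₃ T₂ T₃, 0 ≤ q.1 → 0 ≤ q.2 → q.1 / u₂ + q.2 / u₃ = 1 := by
  obtain ⟨hT₂, hT₃, hu₂, hu₃, -, -⟩ := hg
  rintro q (((hq | hq) | hq) | hq) hq₁ hq₂
  · exact segment_axes_intercept hu₂.ne' hu₃.ne' hq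
  · obtain rfl := eq_left_of_mem_segment_of_map_nonneg (LinearMap.snd ℝ ℝ ℝ) hq rfl hT₂.2.1 hq₂
    simp [hu₂.ne']
  · exact absurd (arcE_fst_neg ha hΔ hq) hq₁.not_gt
  · rw [segment_symm] at hq
    obtain rfl := eq_left_of_mem_segment_of_map_nonneg (LinearMap.fst ℝ ℝ ℝ) hq rfl hT₃.2.1 hq₁
    simp [hu₃.ne']

lemma IsPhi.eq_of_nonneg {L : Set (ℝ × ℝ)} {φ : ℝ × ℝ → ℝ} (hφ : IsPhi L φ) {u v : ℝ}
    (hL : ∀ q ∈ L, 0 ≤ q.1 → 0 ≤ q.2 → q.1 / u + q.2 / v = 1) {p : ℝ × ℝ}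
    (hp₁ : 0 ≤ p.1) (hp₂ : 0 ≤ p.2) : φ p = p.1 / u + p.2 / v := by
  rcases eq_or_ne p 0 with rfl | hp
  · simp [hφ.1]
  obtain ⟨hφp, hmem⟩ := hφ.2 p hp
  have h := hL _ hmem (by simp only [Prod.smul_fst]; positivity)
    (by simp only [Prod.smul_snd]; positivity)
  simp only [Prod.smul_fst, Prod.smul_snd, smul_eq_mul, mul_div_assoc, ← mul_add] at h
  exact (inv_mul_eq_one₀ hφp.ne').1 h

lemma hasSum_ite_eq_mul {β : Type*} [DecidableEq β] (g : β → ℝ) (w : β) (c : ℝ) :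
    HasSum (fun z => (if z = w then c else 0) * g z) (c * g w) := by
  simpa using hasSum_single (f := fun z => (if z = w then c else 0) * g z) w
    (fun z hz => by simp [hz])

lemma tsum_sker_mul (l1 l2 l3 : ℝ) (y : ℤ × ℤ) (g : ℤ × ℤ → ℝ) :
    ∑' z, sker l1 l2 l3 y z * g z =
      l2 * g (y + (1, 0)) + l3 * g (y + (0, 1)) + l1 * g (y - (1, 1)) := by
  simp only [sker, add_mul]
  exact (((hasSum_ite_eq_mul g _ _).add (hasSum_ite_eq_mul g _ _)).add
    (hasSum_ite_eq_mul g _ _)).tsum_eq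

lemma tsum_sker_mul_sub_of_eq_linear {l1 l2 l3 u v : ℝ} {ψ : ℤ × ℤ → ℝ}
    (hψ : ∀ z, 0 ≤ z → ψ z = z.1 / u + z.2 / v) {y : ℤ × ℤ} (hy₁ : 0 < y.1) (hy₂ : 0 < y.2) :
    ∑' z, sker l1 l2 l3 y z * (ψ z - ψ y) = (l2 - l1) / u + (l3 - l1) / v := by
  have hq {z : ℤ × ℤ} (h₁ : 0 ≤ z.1) (h₂ : 0 ≤ z.2) : 0 ≤ z := Prod.le_def.2 ⟨h₁, h₂⟩
  rw [tsum_sker_mul, hψ y (hq hy₁.le hy₂.le),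
    hψ _ (hq (by simp; omega) (by simp; omega)), hψ _ (hq (by simp; omega) (by simp; omega)),
    hψ _ (hq (by simp; omega) (by simp; omega))]
  simp only [Prod.fst_add, Prod.snd_add, Prod.fst_sub, Prod.snd_sub]
  push_cast
  ring

section Rollback

variable {b12 b23 b2 : ℝ}

lemma rker_nonneg (hb12 : 0 ≤ b12) (hb23 : 0 ≤ b23) (hb2 : 0 ≤ b2) (hb2' : b2 ≤ 1)
    (y z : ℤ × ℤ) : 0 ≤ rker b12 b23 b2 y z := by
  have h1b2 : 0 ≤ 1 - b2 := sub_nonneg.2 hb2'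
  unfold rker
  split_ifs <;> positivity

lemma mem_Icc_of_rker_ne_zero {y z : ℤ × ℤ} (hy₁ : 0 < y.1) (hy₂ : 0 < y.2)
    (hz : rker b12 b23 b2 y z ≠ 0) : z ∈ Icc 0 y := by
  obtain ⟨y₁, y₂⟩ := y
  obtain ⟨z₁, z₂⟩ := z
  contrapose! hz
  simp only [mem_Icc, Prod.le_def, Prod.fst_zero, Prod.snd_zero] at hz
  simp only [rker, Prod.mk.injEq] at hy₁ hy₂ ⊢
  split_ifs <;> first | omega | simp

lemma rker_zero {y : ℤ × ℤ} (hy₁ : 0 < y.1) (hy₂ : 0 < y.2) :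
    rker b12 b23 b2 y 0 = b12 * b2 := by
  obtain ⟨y₁, y₂⟩ := y
  simp only [rker, Prod.mk.injEq, Prod.zero_eq_mk, true_and] at hy₁ hy₂ ⊢
  split_ifs <;> first | omega | simp

lemma tsum_rker_mul_sub_le (hb12 : 0 ≤ b12) (hb23 : 0 ≤ b23) (hb2 : 0 ≤ b2) (hb2' : b2 ≤ 1)
    {ψ : ℤ × ℤ → ℝ} (hψ : MonotoneOn ψ (Ici 0)) {y : ℤ × ℤ} (hy₁ : 0 < y.1) (hy₂ : 0 < y.2) :
    ∑' z, rker b12 b23 b2 y z * (ψ z - ψ y) ≤ b12 * b2 * (ψ 0 - ψ y) := by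
  set f := fun z => rker b12 b23 b2 y z * (ψ z - ψ y)
  have hsupp : Function.support f ⊆ Icc 0 y := fun z hz =>
    mem_Icc_of_rker_ne_zero hy₁ hy₂ (left_ne_zero_of_mul hz)
  have hf : Summable f := summable_of_hasFiniteSupport ((finite_Icc 0 y).subset hsupp)
  have hf_nonpos : ∀ z, f z ≤ 0 := by
    intro z
    by_cases hz : z ∈ Icc 0 y
    · exact mul_nonpos_of_nonneg_of_nonpos (rker_nonneg hb12 hb23 hb2 hb2' y z)
        (sub_nonpos.2 (hψ hz.1 (mem_Ici.2 (hz.1.trans hz.2)) hz.2))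
    · exact (Function.notMem_support.1 fun h => hz (hsupp h)).le
  have := hf.neg.le_tsum 0 fun z _ => neg_nonneg.2 (hf_nonpos z)
  rw [tsum_neg, neg_le_neg_iff] at this
  simpa [f, rker_zero hy₁ hy₂] using this

end Rollback

theorem stmt12_general (l1 l2 l3 b12 b23 : ℝ)
    (hl2 : 0 < l2) (hb12 : 0 < b12) (hb23 : 0 < b23)
    (a b : ℝ) (ha : 0 < a) :
    ∃ Δ₀ > (0 : ℝ), ∀ Δ > Δ₀, ∀ u₂ u₃ : ℝ, ∀ T₂ T₃ : ℝ × ℝ,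
      GoodConfig a b Δ u₂ u₃ T₂ T₃ →
      ∀ φ : ℝ × ℝ → ℝ, IsPhi (contourL a b Δ u₂ u₃ T₂ T₃) φ →
      (∀ y : ℤ × ℤ, 0 < y.1 → 0 < y.2 →
        (∑' z : ℤ × ℤ, sker l1 l2 l3 y z * (φ (iv z) - φ (iv y)))
          = (l2 - l1) / u₂ + (l3 - l1) / u₃) ∧
      (∃ C > (0 : ℝ), ∃ γ > (0 : ℝ), ∀ y : ℤ × ℤ, 0 < y.1 → 0 < y.2 → C < φ (iv y) →
        (∑' z : ℤ × ℤ, rker b12 b23 (l2 / (l2 + b12)) y z * (φ (iv z) - φ (iv y)))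
          ≤ -(γ * φ (iv y))) := by
  refine ⟨1, one_pos, fun Δ hΔ u₂ u₃ T₂ T₃ hg φ hφ => ?_⟩
  have hu₂ : 0 < u₂ := hg.2.2.1
  have hu₃ : 0 < u₃ := hg.2.2.2.1
  have hφ_lin (z : ℤ × ℤ) (hz : 0 ≤ z) : φ (iv z) = z.1 / u₂ + z.2 / u₃ :=
    hφ.eq_of_nonneg (hg.contourL_quadrant ha hΔ) (by simpa [iv] using hz.1)
      (by simpa [iv] using hz.2)
  refine ⟨fun y hy₁ hy₂ => tsum_sker_mul_sub_of_eq_linear hφ_lin hy₁ hy₂, ?_⟩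
  have hb2 : 0 < l2 / (l2 + b12) := by positivity
  have hb2' : l2 / (l2 + b12) ≤ 1 := (div_le_one (by positivity)).2 (by linarith)
  refine ⟨1, one_pos, b12 * (l2 / (l2 + b12)), by positivity, fun y hy₁ hy₂ _ => ?_⟩
  have hmono : MonotoneOn (fun z => φ (iv z)) (Ici 0) := by
    intro z hz w hw hzw
    obtain ⟨h₁, h₂⟩ := Prod.le_def.1 hzw
    simp only [hφ_lin z hz, hφ_lin w hw]
    gcongr
  calc _ ≤ b12 * (l2 / (l2 + b12)) * (φ (iv 0) - φ (iv y)) :=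
        tsum_rker_mul_sub_le hb12.le hb23.le hb2.le hb2' hmono hy₁ hy₂
    _ = _ := by simp [hφ_lin 0 le_rfl]

/-- Lemma about the positive quadrant `E₁ = {y₂ > 0, y₃ > 0}`: for all
sufficiently large `Δ`: (1) for every `y ∈ ℤ²` with `y₂ > 0`, `y₃ > 0`,
`Σ_z s_{yz}(φ(z) − φ(y)) = (λ₂−λ₁)/u₂ + (λ₃−λ₁)/u₃`, independent of `y`;
(2) there are `C > 0`, `γ > 0` such that for every such `y` with `φ(y) > C`,
`Σ_z r_{yz}(φ(z) − φ(y)) ≤ −γ·φ(y)`. -/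
theorem stmt12 (l1 l2 l3 b12 b23 : ℝ)
    (hl1 : 0 < l1) (hl2 : 0 < l2) (hl3 : 0 < l3) (hb12 : 0 < b12) (hb23 : 0 < b23)
    (hsum : l1 + l2 + l3 + b12 + b23 = 1)
    (a b : ℝ) (ha : 0 < a) (hb : 0 < b) :
    ∃ Δ₀ > (0 : ℝ), ∀ Δ > Δ₀, ∀ u₂ u₃ : ℝ, ∀ T₂ T₃ : ℝ × ℝ,
      GoodConfig a b Δ u₂ u₃ T₂ T₃ →
      ∀ φ : ℝ × ℝ → ℝ, IsPhi (contourL a b Δ u₂ u₃ T₂ T₃) φ →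
      (∀ y : ℤ × ℤ, 0 < y.1 → 0 < y.2 →
        (∑' z : ℤ × ℤ, sker l1 l2 l3 y z * (φ (iv z) - φ (iv y)))
          = (l2 - l1) / u₂ + (l3 - l1) / u₃) ∧
      (∃ C > (0 : ℝ), ∃ γ > (0 : ℝ), ∀ y : ℤ × ℤ, 0 < y.1 → 0 < y.2 → C < φ (iv y) →
        (∑' z : ℤ × ℤ, rker b12 b23 (l2 / (l2 + b12)) y z * (φ (iv z) - φ (iv y)))
          ≤ -(γ * φ (iv y))) :=
  stmt12_general l1 l2 l3 b12 b23 hl2 hb12 hb23 a b ha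
end
end
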